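/- arXiv:2009.11373 — 4 statements merged into one kernel-verified Lean document; each statement's English description precedes it below -/
import Mathlib

section
/- Let (M,d) be a metric space, Ω ⊆ M a finite subset, L ≥ 1, and α : Ω → [0,∞). Then the following two statements are equivalent. (1) For every real Banach space (Y,‖·‖_Y) and every 1-Lipschitz map f : Ω → Y there is an L-Lipschitz map F : M → Y with ‖F(ω) − f(ω)‖_Y ≤ α(ω) for every ω ∈ Ω. (2) For every probability measure ν on Ω and every x ∈ M there is μ_x : Ω → ℝ with ∑_{ω∈Ω} μ_x(ω) = 0, such that ‖μ_x − μ_y‖_{W1(Ω)} ≤ L·d(x,y) for all x,y ∈ M, and ‖μ_ω − (δ_ω − ν)‖_{W1(Ω)} ≤ α(ω) for every ω ∈ Ω, where δ_ω is the point mass at ω. -/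
set_option linter.unusedSectionVars false

/-- The Wasserstein-1 norm of a (signed) mass distribution `μ` on a finite subset `Ω`
of a metric space: `‖μ‖_{W1(Ω)} = sup { ∑_{ω ∈ Ω} φ(ω) μ(ω) : φ 1-Lipschitz on Ω }`. -/
noncomputable def W1norm {M : Type*} [MetricSpace M] (Ω : Finset M) (μ : M → ℝ) : ℝ :=
  ⨆ φ : {φ : M → ℝ // LipschitzOnWith 1 φ (Ω : Set M)}, ∑ ω ∈ Ω, φ.1 ω * μ ω

namespace W1aux
variable {M : Type*} [MetricSpace M] (Ω : Finset M)

abbrev LipT (Ω : Finset M) := {φ : M → ℝ // LipschitzOnWith 1 φ (Ω : Set M)}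

instance : Nonempty (LipT Ω) :=
  ⟨⟨0, ((LipschitzWith.const (0:ℝ)).weaken zero_le_one).lipschitzOnWith⟩⟩

variable {Ω}

lemma lip_neg (φ : LipT Ω) : LipschitzOnWith 1 (-φ.1) (Ω : Set M) := by
  intro x hx y hy
  simpa [edist_neg_neg] using φ.2 hx hy

lemma bdd {μ : M → ℝ} (h0 : ∑ ω ∈ Ω, μ ω = 0) :
    BddAbove (Set.range fun φ : LipT Ω => ∑ ω ∈ Ω, φ.1 ω * μ ω) := by
  rcases Ω.eq_empty_or_nonempty with hΩ | ⟨a₀, ha₀⟩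
  · subst hΩ; exact ⟨0, by rintro x ⟨φ, rfl⟩; simp⟩
  · refine ⟨∑ ω ∈ Ω, dist ω a₀ * |μ ω|, ?_⟩
    rintro x ⟨φ, rfl⟩
    have key : ∑ ω ∈ Ω, φ.1 ω * μ ω = ∑ ω ∈ Ω, (φ.1 ω - φ.1 a₀) * μ ω := by
      have : ∑ ω ∈ Ω, (φ.1 ω - φ.1 a₀) * μ ω
          = ∑ ω ∈ Ω, φ.1 ω * μ ω - φ.1 a₀ * ∑ ω ∈ Ω, μ ω := by
        rw [Finset.mul_sum, ← Finset.sum_sub_distrib]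
        exact Finset.sum_congr rfl fun ω _ => by ring
      rw [this, h0, mul_zero, sub_zero]
    show ∑ ω ∈ Ω, φ.1 ω * μ ω ≤ _
    rw [key]
    refine Finset.sum_le_sum fun ω hω => ?_
    calc (φ.1 ω - φ.1 a₀) * μ ω ≤ |φ.1 ω - φ.1 a₀| * |μ ω| := by
          rw [← abs_mul]; exact le_abs_self _
      _ ≤ dist ω a₀ * |μ ω| := by
          refine mul_le_mul_of_nonneg_right ?_ (abs_nonneg _)
          have := φ.2.dist_le_mul ω (by simpa using hω) a₀ (by simpa using ha₀)
          simpa [Real.dist_eq] using this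

lemma le_w1 {μ : M → ℝ} (h0 : ∑ ω ∈ Ω, μ ω = 0) (φ : LipT Ω) :
    ∑ ω ∈ Ω, φ.1 ω * μ ω ≤ W1norm Ω μ :=
  le_ciSup (bdd h0) φ

lemma w1_le {μ : M → ℝ} {c : ℝ} (h : ∀ φ : LipT Ω, ∑ ω ∈ Ω, φ.1 ω * μ ω ≤ c) :
    W1norm Ω μ ≤ c :=
  ciSup_le h

lemma w1_nonneg {μ : M → ℝ} (h0 : ∑ ω ∈ Ω, μ ω = 0) : 0 ≤ W1norm Ω μ := by
  have := le_w1 h0 ⟨0, ((LipschitzWith.const (0:ℝ)).weaken zero_le_one).lipschitzOnWith⟩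
  simpa using this

lemma w1_congr {μ₁ μ₂ : M → ℝ} (h : ∀ ω ∈ Ω, μ₁ ω = μ₂ ω) :
    W1norm Ω μ₁ = W1norm Ω μ₂ := by
  unfold W1norm
  exact iSup_congr fun φ => Finset.sum_congr rfl fun ω hω => by rw [h ω hω]

lemma w1_add_le {μ₁ μ₂ : M → ℝ} (h1 : ∑ ω ∈ Ω, μ₁ ω = 0) (h2 : ∑ ω ∈ Ω, μ₂ ω = 0) :
    W1norm Ω (fun ω => μ₁ ω + μ₂ ω) ≤ W1norm Ω μ₁ + W1norm Ω μ₂ := by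
  refine w1_le fun φ => ?_
  have : ∑ ω ∈ Ω, φ.1 ω * (μ₁ ω + μ₂ ω)
      = (∑ ω ∈ Ω, φ.1 ω * μ₁ ω) + ∑ ω ∈ Ω, φ.1 ω * μ₂ ω := by
    rw [← Finset.sum_add_distrib]; exact Finset.sum_congr rfl fun ω _ => by ring
  rw [this]
  exact add_le_add (le_w1 h1 φ) (le_w1 h2 φ)

lemma w1_neg {μ : M → ℝ} (h0 : ∑ ω ∈ Ω, μ ω = 0) :
    W1norm Ω (fun ω => -μ ω) = W1norm Ω μ := by
  have h0' : ∑ ω ∈ Ω, -μ ω = 0 := by simp [h0]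
  have main : ∀ (ν : M → ℝ), (∑ ω ∈ Ω, ν ω = 0) →
      W1norm Ω (fun ω => -ν ω) ≤ W1norm Ω ν := by
    intro ν hν
    refine w1_le fun φ => ?_
    have : ∑ ω ∈ Ω, φ.1 ω * -ν ω = ∑ ω ∈ Ω, (-φ.1) ω * ν ω :=
      Finset.sum_congr rfl fun ω _ => by simp only [Pi.neg_apply]; ring
    rw [this]
    exact le_w1 hν ⟨-φ.1, lip_neg φ⟩
  refine le_antisymm (main μ h0) ?_
  have := main (fun ω => -μ ω) h0'
  simpa using this

lemma w1_smul_le (c : ℝ) {μ : M → ℝ} (h0 : ∑ ω ∈ Ω, μ ω = 0) :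
    W1norm Ω (fun ω => c * μ ω) ≤ |c| * W1norm Ω μ := by
  refine w1_le fun φ => ?_
  rcases le_or_gt 0 c with hc | hc
  · have : ∑ ω ∈ Ω, φ.1 ω * (c * μ ω) = c * ∑ ω ∈ Ω, φ.1 ω * μ ω := by
      rw [Finset.mul_sum]; exact Finset.sum_congr rfl fun ω _ => by ring
    rw [this, abs_of_nonneg hc]
    exact mul_le_mul_of_nonneg_left (le_w1 h0 φ) hc
  · have : ∑ ω ∈ Ω, φ.1 ω * (c * μ ω) = |c| * ∑ ω ∈ Ω, (-φ.1) ω * μ ω := by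
      rw [Finset.mul_sum]
      refine Finset.sum_congr rfl fun ω _ => ?_
      simp [Pi.neg_apply, abs_of_neg hc]; ring
    rw [this]
    exact mul_le_mul_of_nonneg_left (le_w1 h0 ⟨-φ.1, lip_neg φ⟩) (abs_nonneg c)

/-- Key lemma for the backward direction. -/
lemma norm_sum_smul_le {Y : Type*} [NormedAddCommGroup Y] [NormedSpace ℝ Y]
    {f : M → Y} (hf : LipschitzOnWith 1 f (Ω : Set M)) {σ : M → ℝ}
    (h0 : ∑ a ∈ Ω, σ a = 0) :
    ‖∑ a ∈ Ω, σ a • f a‖ ≤ W1norm Ω σ := by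
  set v := ∑ a ∈ Ω, σ a • f a with hv
  by_cases hv0 : v = 0
  · rw [hv0, norm_zero]; exact w1_nonneg h0
  · obtain ⟨g, hg1, hgv⟩ := exists_dual_vector ℝ v (norm_ne_zero_iff.mpr hv0)
    have hlip : LipschitzOnWith 1 (fun x => g (f x)) (Ω : Set M) := by
      have : LipschitzWith 1 g := by
        have := g.lipschitz
        rwa [show ‖g‖₊ = 1 from by simpa [← NNReal.coe_inj] using hg1] at this
      simpa [Function.comp_def] using this.comp_lipschitzOnWith hf
    have hgv' : g v = ‖v‖ := by exact_mod_cast hgv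
    have : ‖v‖ = ∑ a ∈ Ω, (fun x => g (f x)) a * σ a := by
      rw [← hgv', hv, map_sum]
      exact Finset.sum_congr rfl fun a _ => by simp [mul_comm]
    rw [this]
    exact le_w1 h0 ⟨_, hlip⟩

end W1aux



section FreeW1
variable {M : Type*} [MetricSpace M] [DecidableEq M]

/-- Zero-sum vectors indexed by `Fin Ω.card`; will carry the `W1` norm. -/
structure FreeW1 (Ω : Finset M) : Type where
  g : Fin Ω.card → ℝ
  sum0 : ∑ i, g i = 0

namespace FreeW1

variable {Ω : Finset M}

noncomputable def findex (Ω : Finset M) : {x // x ∈ Ω} ≃ Fin Ω.card :=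
  Fintype.equivFinOfCardEq (Fintype.card_coe Ω)

/-- Extend a vector to a function on `M`, zero outside `Ω`. -/
noncomputable def extFun (Ω : Finset M) (g : Fin Ω.card → ℝ) : M → ℝ :=
  fun x => if h : x ∈ Ω then g (findex Ω ⟨x, h⟩) else 0

lemma extFun_apply (g : Fin Ω.card → ℝ) {x : M} (hx : x ∈ Ω) :
    extFun Ω g x = g (findex Ω ⟨x, hx⟩) := dif_pos hx

lemma sum_index (F : M → ℝ) :
    ∑ i, F ((findex Ω).symm i : M) = ∑ ω ∈ Ω, F ω := by
  rw [Equiv.sum_comp (findex Ω).symm (fun x : {x // x ∈ Ω} => F (x : M))]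
  exact Finset.sum_coe_sort Ω F

lemma sum_extFun (g : Fin Ω.card → ℝ) : ∑ ω ∈ Ω, extFun Ω g ω = ∑ i, g i := by
  rw [← sum_index (extFun Ω g)]
  refine Finset.sum_congr rfl fun i _ => ?_
  rw [extFun_apply g ((findex Ω).symm i).2]
  congr 1
  simp

@[ext] lemma ext' {a b : FreeW1 Ω} (h : a.g = b.g) : a = b := by
  cases a; cases b; simpa using h

instance : Zero (FreeW1 Ω) := ⟨⟨0, by simp⟩⟩
instance : Add (FreeW1 Ω) :=
  ⟨fun a b => ⟨a.g + b.g, by simp [Finset.sum_add_distrib, a.sum0, b.sum0]⟩⟩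
instance : Neg (FreeW1 Ω) := ⟨fun a => ⟨-a.g, by simp [a.sum0]⟩⟩
instance : Sub (FreeW1 Ω) :=
  ⟨fun a b => ⟨a.g - b.g, by simp [Finset.sum_sub_distrib, a.sum0, b.sum0]⟩⟩
instance : SMul ℝ (FreeW1 Ω) :=
  ⟨fun c a => ⟨c • a.g, by simp [← Finset.mul_sum, a.sum0]⟩⟩
instance : SMul ℕ (FreeW1 Ω) :=
  ⟨fun c a => ⟨c • a.g, by simp [← Finset.mul_sum, a.sum0]⟩⟩
instance : SMul ℤ (FreeW1 Ω) :=
  ⟨fun c a => ⟨c • a.g, by simp [← Finset.mul_sum, a.sum0]⟩⟩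

lemma g_injective : Function.Injective (FreeW1.g (Ω := Ω)) :=
  fun _ _ h => ext' h

instance : AddCommGroup (FreeW1 Ω) :=
  g_injective.addCommGroup _ rfl (fun _ _ => rfl) (fun _ => rfl) (fun _ _ => rfl)
    (fun _ _ => rfl) (fun _ _ => rfl)

instance : Module ℝ (FreeW1 Ω) :=
  Function.Injective.module ℝ ⟨⟨FreeW1.g, rfl⟩, fun _ _ => rfl⟩ g_injective fun _ _ => rfl


lemma extFun_add (a b : Fin Ω.card → ℝ) (x : M) :
    extFun Ω (a + b) x = extFun Ω a x + extFun Ω b x := by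
  unfold extFun; split <;> simp

lemma extFun_sub (a b : Fin Ω.card → ℝ) (x : M) :
    extFun Ω (a - b) x = extFun Ω a x - extFun Ω b x := by
  unfold extFun; split <;> simp

lemma extFun_neg (a : Fin Ω.card → ℝ) (x : M) :
    extFun Ω (-a) x = -extFun Ω a x := by
  unfold extFun; split <;> simp

lemma extFun_smul (c : ℝ) (a : Fin Ω.card → ℝ) (x : M) :
    extFun Ω (c • a) x = c * extFun Ω a x := by
  unfold extFun; split <;> simp

lemma sum_extFun_mem (v : FreeW1 Ω) : ∑ ω ∈ Ω, extFun Ω v.g ω = 0 := by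
  rw [sum_extFun]; exact v.sum0

noncomputable instance : NormedAddCommGroup (FreeW1 Ω) :=
  AddGroupNorm.toNormedAddCommGroup
  { toFun := fun v => W1norm Ω (extFun Ω v.g)
    map_zero' := by
      show W1norm Ω (extFun Ω (0 : FreeW1 Ω).g) = 0
      have : extFun Ω (0 : FreeW1 Ω).g = fun _ : M => (0:ℝ) := by
        funext x; show extFun Ω (0 : Fin Ω.card → ℝ) x = 0
        unfold extFun; split <;> simp
      rw [this]
      refine le_antisymm (W1aux.w1_le fun φ => by simp) ?_
      simpa using W1aux.w1_nonneg (μ := fun _ : M => (0:ℝ)) (by simp)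
    add_le' := fun a b => by
      show W1norm Ω (extFun Ω (a + b).g) ≤ W1norm Ω (extFun Ω a.g) + W1norm Ω (extFun Ω b.g)
      have h : extFun Ω (a + b).g = fun x => extFun Ω a.g x + extFun Ω b.g x := by
        funext x; exact extFun_add a.g b.g x
      rw [h]
      exact W1aux.w1_add_le (sum_extFun_mem a) (sum_extFun_mem b)
    neg' := fun a => by
      have h : extFun Ω (-a).g = fun x => -extFun Ω a.g x := by
        funext x; exact extFun_neg a.g x
      show W1norm Ω (extFun Ω (-a).g) = W1norm Ω (extFun Ω a.g)
      rw [h]; exact W1aux.w1_neg (sum_extFun_mem a)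
    eq_zero_of_map_eq_zero' := fun a ha => by
      have haa : W1norm Ω (extFun Ω a.g) = 0 := ha
      by_contra hne
      obtain ⟨i, hi⟩ : ∃ i, a.g i ≠ 0 := by
        by_contra h; push_neg at h; exact hne (ext' (funext h))
      set a₀ : M := ((findex Ω).symm i : M) with ha₀def
      have ha₀ : a₀ ∈ Ω := ((findex Ω).symm i).2
      have hσa₀ : extFun Ω a.g a₀ = a.g i := by
        rw [extFun_apply a.g ha₀]
        congr 1
        simp [ha₀def]
      rcases eq_or_ne (Ω.erase a₀) ∅ with herase | herase
      · have := sum_extFun_mem a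
        rw [Finset.sum_eq_single_of_mem a₀ ha₀ (fun b hb hbne => by
          exact absurd (Finset.mem_erase.mpr ⟨hbne, hb⟩) (by simp [herase])), hσa₀] at this
        exact hi this
      · -- φ := distance to Ω.erase a₀
        set s : Set M := (↑(Ω.erase a₀) : Set M) with hs
        have hsne : s.Nonempty := by
          rcases Finset.nonempty_iff_ne_empty.mpr herase with ⟨x, hx⟩
          exact ⟨x, by rw [hs]; exact Finset.mem_coe.mpr hx⟩
        have hsclosed : IsClosed s := (Ω.erase a₀).finite_toSet.isClosed
        set φ : M → ℝ := fun x => Metric.infDist x s with hφ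
        have hφlip : LipschitzOnWith 1 φ (Ω : Set M) :=
          (Metric.lipschitz_infDist_pt s).lipschitzOnWith
        have hφ0 : ∀ x ∈ Ω.erase a₀, φ x = 0 := fun x hx =>
          Metric.infDist_zero_of_mem (by rw [hs]; exact Finset.mem_coe.mpr hx)
        have hφpos : 0 < φ a₀ := by
          rw [hφ]
          exact (hsclosed.notMem_iff_infDist_pos hsne).mp
            (by simp [hs, Finset.mem_erase])
        have hval : ∀ ψ : M → ℝ, (∀ x ∈ Ω.erase a₀, ψ x = 0) →
            ∑ ω ∈ Ω, ψ ω * extFun Ω a.g ω = ψ a₀ * a.g i := by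
          intro ψ hψ
          rw [← Finset.add_sum_erase Ω _ ha₀, hσa₀]
          rw [Finset.sum_eq_zero fun x hx => by rw [hψ x hx, zero_mul], add_zero]
        have h1 : φ a₀ * a.g i ≤ 0 := by
          have := W1aux.le_w1 (sum_extFun_mem a) ⟨φ, hφlip⟩
          rw [haa] at this
          calc φ a₀ * a.g i = ∑ ω ∈ Ω, φ ω * extFun Ω a.g ω := (hval φ hφ0).symm
            _ ≤ 0 := this
        have h2 : -(φ a₀ * a.g i) ≤ 0 := by
          have hmlip := W1aux.lip_neg (Ω := Ω) ⟨φ, hφlip⟩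
          have := W1aux.le_w1 (sum_extFun_mem a) ⟨-φ, hmlip⟩
          rw [haa] at this
          calc -(φ a₀ * a.g i) = ∑ ω ∈ Ω, (-φ) ω * extFun Ω a.g ω := by
                rw [hval (-φ) fun x hx => by simp [hφ0 x hx]]
                simp
            _ ≤ 0 := this
        have : φ a₀ * a.g i = 0 := le_antisymm h1 (by linarith)
        rcases mul_eq_zero.mp this with h | h
        · exact absurd h (ne_of_gt hφpos)
        · exact hi h }

lemma norm_def (v : FreeW1 Ω) : ‖v‖ = W1norm Ω (extFun Ω v.g) := rfl

noncomputable instance : NormedSpace ℝ (FreeW1 Ω) where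
  norm_smul_le c v := by
    rw [norm_def, norm_def]
    have h : extFun Ω (c • v).g = fun x => c * extFun Ω v.g x := by
      funext x; exact extFun_smul c v.g x
    rw [h]
    simpa [Real.norm_eq_abs] using W1aux.w1_smul_le c (sum_extFun_mem v)

instance : FiniteDimensional ℝ (FreeW1 Ω) :=
  FiniteDimensional.of_injective
    ({ toFun := FreeW1.g, map_add' := fun _ _ => rfl, map_smul' := fun _ _ => rfl } :
      FreeW1 Ω →ₗ[ℝ] (Fin Ω.card → ℝ)) g_injective

instance : CompleteSpace (FreeW1 Ω) := FiniteDimensional.complete ℝ _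

end FreeW1
end FreeW1

open FreeW1 W1aux

/-- **Duality for almost extension (Proposition 2.3).** For a metric space `M`, a finite
subset `Ω ⊆ M`, `L ≥ 1` and `α : Ω → [0,∞)`, the almost-extension property for all
Banach-space-valued `1`-Lipschitz maps on `Ω` is equivalent to the existence, for every
probability measure `ν` on `Ω`, of a measure-valued stochastic retraction
`x ↦ μ_x ∈ W1(Ω)` with `‖μ_x - μ_y‖ ≤ L d(x,y)` and `‖μ_ω - (δ_ω - ν)‖ ≤ α(ω)`. -/
theorem almost_extension_duality {M : Type*} [MetricSpace M] [DecidableEq M]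
    (Ω : Finset M) (L : ℝ) (hL : 1 ≤ L) (α : M → ℝ) (hα : ∀ ω ∈ Ω, 0 ≤ α ω) :
    (∀ (Y : Type) [NormedAddCommGroup Y] [NormedSpace ℝ Y] [CompleteSpace Y]
      (f : M → Y), LipschitzOnWith 1 f (Ω : Set M) →
        ∃ F : M → Y, LipschitzWith L.toNNReal F ∧ ∀ ω ∈ Ω, ‖F ω - f ω‖ ≤ α ω)
    ↔
    (∀ ν : M → ℝ, (∀ ω ∈ Ω, 0 ≤ ν ω) → (∑ ω ∈ Ω, ν ω) = 1 →
      ∃ μ : M → M → ℝ,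
        (∀ x : M, ∑ ω ∈ Ω, μ x ω = 0) ∧
        (∀ x y : M, W1norm Ω (fun ω => μ x ω - μ y ω) ≤ L * dist x y) ∧
        (∀ ω ∈ Ω,
          W1norm Ω (fun a => μ ω a - ((if a = ω then 1 else 0) - ν a)) ≤ α ω)) := by
  have hL0 : (0:ℝ) ≤ L := le_trans zero_le_one hL
  have hLcoe : (L.toNNReal : ℝ) = L := Real.coe_toNNReal _ hL0
  constructor
  · -- (1) → (2)
    intro H ν hν hν1
    set dvec : M → Fin Ω.card → ℝ := fun x i =>
      (if ((findex Ω).symm i : M) = x then 1 else 0) - ν ((findex Ω).symm i : M) with hdvec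
    have hdsum : ∀ x ∈ Ω, ∑ i, dvec x i = 0 := by
      intro x hx
      rw [hdvec]
      rw [Finset.sum_sub_distrib]
      rw [sum_index (Ω := Ω) (fun ω => if ω = x then 1 else 0),
        sum_index (Ω := Ω) ν, hν1]
      simp [Finset.sum_ite_eq', hx]
    set f : M → FreeW1 Ω := fun x => if h : x ∈ Ω then ⟨dvec x, hdsum x h⟩ else 0 with hfdef
    have hfg : ∀ x ∈ Ω, (f x).g = dvec x := by
      intro x hx; rw [hfdef]; simp [hx]
    have hext : ∀ (x a : M), a ∈ Ω →
        extFun Ω (dvec x) a = (if a = x then 1 else 0) - ν a := by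
      intro x a ha
      rw [extFun_apply _ ha, hdvec]
      simp
    have hsum_ind : ∀ (ψ : M → ℝ) (x : M), x ∈ Ω →
        ∑ a ∈ Ω, ψ a * (if a = x then (1:ℝ) else 0) = ψ x := by
      intro ψ x hx
      simp [mul_ite, Finset.sum_ite_eq', hx]
    have hflip : LipschitzOnWith 1 f (Ω : Set M) := by
      refine LipschitzOnWith.of_dist_le_mul fun x hx y hy => ?_
      rw [Finset.mem_coe] at hx hy
      have hx' : x ∈ Ω := hx
      have hy' : y ∈ Ω := hy
      rw [dist_eq_norm, norm_def, NNReal.coe_one, one_mul]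
      refine w1_le fun φ => ?_
      have hgsub : (f x - f y).g = dvec x - dvec y := by
        show (f x).g - (f y).g = _
        rw [hfg x hx', hfg y hy']
      have key : ∑ a ∈ Ω, φ.1 a * extFun Ω (f x - f y).g a = φ.1 x - φ.1 y := by
        rw [hgsub]
        have : ∀ a ∈ Ω, φ.1 a * extFun Ω (dvec x - dvec y) a
            = φ.1 a * (if a = x then (1:ℝ) else 0) - φ.1 a * (if a = y then (1:ℝ) else 0) := by
          intro a ha
          rw [extFun_sub, hext x a ha, hext y a ha]
          ring
        rw [Finset.sum_congr rfl this, Finset.sum_sub_distrib,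
          hsum_ind φ.1 x hx', hsum_ind φ.1 y hy']
      rw [key]
      have := φ.2.dist_le_mul x hx y hy
      rw [Real.dist_eq] at this
      calc φ.1 x - φ.1 y ≤ |φ.1 x - φ.1 y| := le_abs_self _
        _ ≤ dist x y := by simpa using this
    obtain ⟨F, hF, hFf⟩ := H (FreeW1 Ω) f hflip
    refine ⟨fun x => extFun Ω (F x).g, fun x => sum_extFun_mem (F x), ?_, ?_⟩
    · intro x y
      have heq : (fun a => extFun Ω (F x).g a - extFun Ω (F y).g a)
          = extFun Ω (F x - F y).g := by
        funext a
        rw [show (F x - F y).g = (F x).g - (F y).g from rfl, extFun_sub]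
      rw [heq, ← norm_def]
      calc ‖F x - F y‖ = dist (F x) (F y) := (dist_eq_norm _ _).symm
        _ ≤ L.toNNReal * dist x y := hF.dist_le_mul x y
        _ = L * dist x y := by rw [hLcoe]
    · intro ω hω
      have hcongr : W1norm Ω (fun a => extFun Ω (F ω).g a - ((if a = ω then 1 else 0) - ν a))
          = W1norm Ω (extFun Ω (F ω - f ω).g) := by
        refine w1_congr fun a ha => ?_
        rw [show (F ω - f ω).g = (F ω).g - (f ω).g from rfl, extFun_sub,
          hfg ω hω, hext ω a ha]
      rw [hcongr, ← norm_def]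
      exact hFf ω hω
  · -- (2) → (1)
    intro H Y _ _ _ f hf
    rcases Ω.eq_empty_or_nonempty with hΩ | ⟨a₀, ha₀⟩
    · exact ⟨fun _ => 0, (LipschitzWith.const 0).weaken zero_le, by simp [hΩ]⟩
    · obtain ⟨μ, hsum, hLip, hclose⟩ := H (fun a => if a = a₀ then 1 else 0)
        (fun ω _ => by split <;> norm_num) (by simp [Finset.sum_ite_eq', ha₀])
      refine ⟨fun x => (∑ a ∈ Ω, μ x a • f a) + f a₀, ?_, ?_⟩
      · refine LipschitzWith.of_dist_le_mul fun x y => ?_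
        rw [dist_eq_norm]
        have heq : ((∑ a ∈ Ω, μ x a • f a) + f a₀) - ((∑ a ∈ Ω, μ y a • f a) + f a₀)
            = ∑ a ∈ Ω, (μ x a - μ y a) • f a := by
          rw [Finset.sum_congr rfl fun a _ => sub_smul (μ x a) (μ y a) (f a),
            Finset.sum_sub_distrib]
          abel
        rw [heq]
        have h0 : ∑ a ∈ Ω, (μ x a - μ y a) = 0 := by
          rw [Finset.sum_sub_distrib, hsum x, hsum y, sub_zero]
        calc ‖∑ a ∈ Ω, (μ x a - μ y a) • f a‖
            ≤ W1norm Ω (fun a => μ x a - μ y a) := norm_sum_smul_le hf h0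
          _ ≤ L * dist x y := hLip x y
          _ = L.toNNReal * dist x y := by rw [hLcoe]
      · intro ω hω
        set σ : M → ℝ := fun a =>
          μ ω a - ((if a = ω then 1 else 0) - (if a = a₀ then 1 else 0)) with hσ
        have heq : ((∑ a ∈ Ω, μ ω a • f a) + f a₀) - f ω = ∑ a ∈ Ω, σ a • f a := by
          have expand : ∀ a ∈ Ω, σ a • f a
              = μ ω a • f a - (if a = ω then (1:ℝ) else 0) • f a
                + (if a = a₀ then (1:ℝ) else 0) • f a := by
            intro a _
            rw [hσ]
            simp only []
            module
          rw [Finset.sum_congr rfl expand]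
          rw [Finset.sum_add_distrib, Finset.sum_sub_distrib]
          have h1 : ∑ a ∈ Ω, (if a = ω then (1:ℝ) else 0) • f a = f ω := by
            simp [ite_smul, Finset.sum_ite_eq', hω]
          have h2 : ∑ a ∈ Ω, (if a = a₀ then (1:ℝ) else 0) • f a = f a₀ := by
            simp [ite_smul, Finset.sum_ite_eq', ha₀]
          rw [h1, h2]
          abel
        rw [heq]
        have h0 : ∑ a ∈ Ω, σ a = 0 := by
          rw [hσ]
          simp only []
          rw [Finset.sum_sub_distrib, Finset.sum_sub_distrib, hsum ω]
          simp [Finset.sum_ite_eq', hω, ha₀]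
        calc ‖∑ a ∈ Ω, σ a • f a‖ ≤ W1norm Ω σ := norm_sum_smul_le hf h0
          _ ≤ α ω := hclose ω hω
end

section
/- Fix L, A, D, K ≥ 1. Suppose (X,‖·‖_X) and (Y,‖·‖_Y) are real Banach spaces and (L,A) is a Y-almost extension pair. Let V ⊆ Y be a linear subspace of Y for which there is a linear bijection T : X → V with ‖x‖_X ≤ ‖Tx‖_Y ≤ D‖x‖_X for all x ∈ X, and suppose there is a K-Lipschitz map ψ : S_Y → V such that ψ(y) = y for every y ∈ S_V = V ∩ S_Y. Then (90·K·D²·L, 9·K·A) is an X-almost extension pair. -/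
/-- `N` is an `ε`-net of `M`: `N ⊆ M`, `N` is `ε`-separated, and every point of `M`
lies within distance `ε` of a point of `N`. -/
def IsNet {X : Type*} [PseudoMetricSpace X] (ε : ℝ) (N M : Set X) : Prop :=
  N ⊆ M ∧ (∀ a ∈ N, ∀ b ∈ N, a ≠ b → ε ≤ dist a b) ∧ ∀ x ∈ M, ∃ a ∈ N, dist x a ≤ ε

/-- `(L, A)` is an `X`-almost extension pair: for every `ε > 0`, every Banach space `Y`,
every `ε`-net `N` of the unit sphere of `X` and every `1`-Lipschitz `f : N → Y`, there
is an `L`-Lipschitz `F : X → Y` with `‖F a - f a‖ ≤ A ε` for all `a ∈ N`. -/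
def AEPair (X : Type*) [NormedAddCommGroup X] [NormedSpace ℝ X] (L A : ℝ) : Prop :=
  ∀ ε : ℝ, 0 < ε →
    ∀ (Y : Type) [NormedAddCommGroup Y] [NormedSpace ℝ Y] [CompleteSpace Y],
    ∀ N : Set X, IsNet ε N (Metric.sphere (0 : X) 1) →
    ∀ f : N → Y, LipschitzWith 1 f →
      ∃ F : X → Y, LipschitzWith L.toNNReal F ∧ ∀ a : N, ‖F (a : X) - f a‖ ≤ A * ε

open Metric

lemma abs_min_sub_min' (a b c : ℝ) : |min a c - min b c| ≤ |a - b| := by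
  rcases le_total a c with h | h <;> rcases le_total b c with h' | h'
  · simp [min_eq_left h, min_eq_left h']
  · rw [min_eq_left h, min_eq_right h', abs_of_nonpos (by linarith), abs_of_nonpos (by linarith)]
    linarith
  · rw [min_eq_right h, min_eq_left h', abs_of_nonneg (by linarith), abs_of_nonneg (by linarith)]
    linarith
  · simp [min_eq_right h, min_eq_right h', abs_nonneg]

lemma normalize_sub_le' {E : Type*} [NormedAddCommGroup E] [NormedSpace ℝ E]
    {u v : E} (hv : 0 < ‖v‖) (h : ‖v‖ ≤ ‖u‖) :
    ‖‖u‖⁻¹ • u - ‖v‖⁻¹ • v‖ ≤ 2 / ‖u‖ * ‖u - v‖ := by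
  have hu : 0 < ‖u‖ := lt_of_lt_of_le hv h
  have hid : ‖u‖⁻¹ • u - ‖v‖⁻¹ • v = ‖u‖⁻¹ • (u - v) + (‖u‖⁻¹ - ‖v‖⁻¹) • v := by
    rw [smul_sub, sub_smul]; abel
  rw [hid]
  have h1 : ‖(‖u‖⁻¹ - ‖v‖⁻¹) • v‖ = (‖v‖⁻¹ - ‖u‖⁻¹) * ‖v‖ := by
    rw [norm_smul, Real.norm_eq_abs, abs_of_nonpos (by
      have := inv_anti₀ hv h; linarith)]
    ring
  have h2 : (‖v‖⁻¹ - ‖u‖⁻¹) * ‖v‖ ≤ ‖u - v‖ / ‖u‖ := by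
    have he : (‖v‖⁻¹ - ‖u‖⁻¹) * ‖v‖ = (‖u‖ - ‖v‖) / ‖u‖ := by
      field_simp
    rw [he, div_le_div_iff_of_pos_right hu]
    have := norm_sub_norm_le u v
    linarith
  have h3 : ‖‖u‖⁻¹ • (u - v)‖ = ‖u - v‖ / ‖u‖ := by
    rw [norm_smul, Real.norm_eq_abs, abs_of_pos (by positivity)]
    rw [inv_mul_eq_div]
  calc ‖‖u‖⁻¹ • (u - v) + (‖u‖⁻¹ - ‖v‖⁻¹) • v‖
      ≤ ‖‖u‖⁻¹ • (u - v)‖ + ‖(‖u‖⁻¹ - ‖v‖⁻¹) • v‖ := norm_add_le _ _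
    _ ≤ ‖u - v‖ / ‖u‖ + ‖u - v‖ / ‖u‖ := by rw [h1, h3]; linarith
    _ = 2 / ‖u‖ * ‖u - v‖ := by ring

lemma radial_lip' {E : Type*} [NormedAddCommGroup E] [NormedSpace ℝ E] (y y' : E) :
    ‖(max 1 ‖y‖)⁻¹ • y - (max 1 ‖y'‖)⁻¹ • y'‖ ≤ 2 * ‖y - y'‖ := by
  set s := max 1 ‖y‖ with hs
  set t := max 1 ‖y'‖ with ht
  have hs1 : (1:ℝ) ≤ s := le_max_left _ _
  have ht1 : (1:ℝ) ≤ t := le_max_left _ _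
  have hs0 : (0:ℝ) < s := by linarith
  have ht0 : (0:ℝ) < t := by linarith
  have hid : s⁻¹ • y - t⁻¹ • y' = s⁻¹ • (y - y') + (s⁻¹ - t⁻¹) • y' := by
    rw [smul_sub, sub_smul]; abel
  rw [hid]
  have hst : |t - s| ≤ ‖y - y'‖ := by
    have h1 : |t - s| ≤ |‖y'‖ - ‖y‖| := by
      rw [hs, ht, max_comm 1 ‖y‖, max_comm 1 ‖y'‖]
      exact abs_max_sub_max_le_abs _ _ _
    have h2 := abs_norm_sub_norm_le y' y
    have h3 : ‖y' - y‖ = ‖y - y'‖ := norm_sub_rev _ _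
    linarith
  have hb : ‖(s⁻¹ - t⁻¹) • y'‖ ≤ ‖y - y'‖ := by
    rw [norm_smul, Real.norm_eq_abs]
    have he : s⁻¹ - t⁻¹ = (t - s) / (s * t) := by field_simp
    have habs : |s⁻¹ - t⁻¹| = |t - s| / (s * t) := by
      rw [he, abs_div, abs_of_pos (show (0:ℝ) < s * t by positivity)]
    rw [habs]
    have hy't : ‖y'‖ ≤ t := le_max_right _ _
    calc |t - s| / (s * t) * ‖y'‖ ≤ |t - s| / (s * t) * t := by
          gcongr
      _ = |t - s| / s := by field_simp
      _ ≤ |t - s| := by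
          rw [div_le_iff₀ hs0]; nlinarith [abs_nonneg (t - s)]
      _ ≤ ‖y - y'‖ := hst
  have ha : ‖s⁻¹ • (y - y')‖ ≤ ‖y - y'‖ := by
    rw [norm_smul, Real.norm_eq_abs, abs_of_pos (by positivity)]
    have : s⁻¹ ≤ 1 := by rw [inv_le_one_iff₀]; right; exact hs1
    nlinarith [norm_nonneg (y - y')]
  calc ‖s⁻¹ • (y - y') + (s⁻¹ - t⁻¹) • y'‖
      ≤ ‖s⁻¹ • (y - y')‖ + ‖(s⁻¹ - t⁻¹) • y'‖ := norm_add_le _ _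
    _ ≤ ‖y - y'‖ + ‖y - y'‖ := by linarith
    _ = 2 * ‖y - y'‖ := by ring

lemma exists_net_of_separated' {α : Type*} [MetricSpace α] {δ : ℝ} (hδ : 0 < δ) (B S : Set α)
    (hSB : S ⊆ B) (hsep : ∀ x ∈ S, ∀ y ∈ S, x ≠ y → δ ≤ dist x y) :
    ∃ M : Set α, S ⊆ M ∧ IsNet δ M B := by
  set P : Set (Set α) := {T | T ⊆ B ∧ ∀ x ∈ T, ∀ y ∈ T, x ≠ y → δ ≤ dist x y} with hP
  obtain ⟨M, hSM, hmax⟩ := zorn_subset_nonempty P (fun c hcP hchain hcne => by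
    refine ⟨⋃₀ c, ⟨?_, ?_⟩, fun s hs => Set.subset_sUnion_of_mem hs⟩
    · exact fun x hx => by
        obtain ⟨T, hTc, hxT⟩ := hx
        exact (hcP hTc).1 hxT
    · rintro x ⟨T₁, hT₁, hx⟩ y ⟨T₂, hT₂, hy⟩ hxy
      rcases hchain.total hT₁ hT₂ with h | h
      · exact (hcP hT₂).2 x (h hx) y hy hxy
      · exact (hcP hT₁).2 x hx y (h hy) hxy) S ⟨hSB, hsep⟩
  refine ⟨M, hSM, hmax.prop.1, hmax.prop.2, fun x hxB => ?_⟩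
  by_contra hcon
  push_neg at hcon
  have hxM : x ∉ M := fun hxM => by have h0 := hcon x hxM; rw [dist_self] at h0; linarith
  have hins : insert x M ∈ P := by
    constructor
    · exact Set.insert_subset hxB hmax.prop.1
    · rintro a (rfl | ha) b (rfl | hb) hab
      · exact absurd rfl hab
      · exact le_of_lt (hcon b hb)
      · rw [dist_comm]; exact le_of_lt (hcon a ha)
      · exact hmax.prop.2 a ha b hb hab
  have := hmax.2 hins (Set.subset_insert x M)
  exact hxM (this (Set.mem_insert x M))

set_option maxHeartbeats 2000000 in
/-- **Lemma 2.6 (transference of almost extension pairs).** If `(L, A)` is a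
`Y`-almost extension pair, `V ⊆ Y` is a subspace with a linear bijection `T : X → V`
satisfying `‖x‖ ≤ ‖Tx‖ ≤ D‖x‖`, and there is a `K`-Lipschitz retraction
`ψ : S_Y → V` fixing `V ∩ S_Y` pointwise, then `(90 K D² L, 9 K A)` is an `X`-almost
extension pair. -/
theorem aepair_transfer (L A D K : ℝ) (hL : 1 ≤ L) (hA : 1 ≤ A) (hD : 1 ≤ D) (hK : 1 ≤ K)
    (X : Type) [NormedAddCommGroup X] [NormedSpace ℝ X] [CompleteSpace X]
    (Y : Type) [NormedAddCommGroup Y] [NormedSpace ℝ Y] [CompleteSpace Y]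
    (hY : AEPair Y L A)
    (V : Submodule ℝ Y)
    (T : X →ₗ[ℝ] V) (hTbij : Function.Bijective T)
    (hT1 : ∀ x : X, ‖x‖ ≤ ‖T x‖) (hT2 : ∀ x : X, ‖T x‖ ≤ D * ‖x‖)
    (ψ : Metric.sphere (0 : Y) 1 → V) (hψ : LipschitzWith K.toNNReal ψ)
    (hψid : ∀ y : Metric.sphere (0 : Y) 1, (y : Y) ∈ V → (ψ y : Y) = (y : Y)) :
    AEPair X (90 * K * D ^ 2 * L) (9 * K * A) := by
  intro ε hε Z _iZ1 _iZ2 _iZ3 N hN f hf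
  rcases N.eq_empty_or_nonempty with rfl | ⟨a₀, ha₀⟩
  · exact ⟨fun _ => 0, (LipschitzWith.const 0).weaken (by positivity),
      fun a => absurd a.2 (Set.notMem_empty _)⟩
  have hD0 : (0:ℝ) < D := by linarith
  have hK0 : (0:ℝ) < K := by linarith
  have hL0 : (0:ℝ) < L := by linarith
  have hA0 : (0:ℝ) < A := by linarith
  set δ : ℝ := ε / (2 * D) with hδdef
  have hδ : 0 < δ := by positivity
  clear_value δ
  set e := LinearEquiv.ofBijective T hTbij with he
  have heT : ∀ x : X, e x = T x := fun x => rfl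
  have hsymmT : ∀ x : X, e.symm (T x) = x := by
    intro x; rw [← heT]; exact e.symm_apply_apply x
  have hTsymm : ∀ w : V, T (e.symm w) = w := by
    intro w; rw [← heT]; exact e.apply_symm_apply w
  have hesymm_norm : ∀ w : V, ‖e.symm w‖ ≤ ‖(w : Y)‖ := by
    intro w
    have h := hT1 (e.symm w)
    rwa [hTsymm w, Submodule.coe_norm] at h
  have hesymm_lb : ∀ w : V, ‖(w : Y)‖ ≤ D * ‖e.symm w‖ := by
    intro w
    have h := hT2 (e.symm w)
    rwa [hTsymm w, Submodule.coe_norm] at h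
  clear_value e
  -- the normalized embedding of the sphere of X into the sphere of Y
  obtain ⟨φ, hφdef⟩ : ∃ φ : X → Y, ∀ x, φ x = ‖(T x : Y)‖⁻¹ • (T x : Y) :=
    ⟨_, fun _ => rfl⟩
  have hnorm1 : ∀ a ∈ N, ‖a‖ = 1 := fun a ha => mem_sphere_zero_iff_norm.mp (hN.1 ha)
  have hTa1 : ∀ a ∈ N, 1 ≤ ‖(T a : Y)‖ := by
    intro a ha
    have h := hT1 a
    rw [Submodule.coe_norm] at h
    rw [← hnorm1 a ha]; exact h
  have hφ_sphere : ∀ a ∈ N, φ a ∈ sphere (0:Y) 1 := by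
    intro a ha
    have h1 : (0:ℝ) < ‖(T a : Y)‖ := lt_of_lt_of_le one_pos (hTa1 a ha)
    rw [mem_sphere_zero_iff_norm, hφdef a, norm_smul, Real.norm_eq_abs,
      abs_of_pos (inv_pos.mpr h1)]
    field_simp
  have hφ_V : ∀ a : X, φ a ∈ V := by
    intro a; rw [hφdef a]; exact V.smul_mem _ (T a).2
  -- key separation estimate
  have hkey : ∀ a ∈ N, ∀ b ∈ N, ‖a - b‖ ≤ 2 * D * ‖φ a - φ b‖ := by
    intro a ha b hb
    set s := ‖(T a : Y)‖ with hsdef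
    set t := ‖(T b : Y)‖ with htdef
    have hs1 : 1 ≤ s := hTa1 a ha
    have ht1 : 1 ≤ t := hTa1 b hb
    have hs0 : (0:ℝ) < s := by linarith
    have ht0 : (0:ℝ) < t := by linarith
    have htD : t ≤ D := by
      have h := hT2 b
      rw [Submodule.coe_norm, hnorm1 b hb] at h
      simpa using h
    have hstep1 : ‖(t * s⁻¹) • a - b‖ ≤ t * ‖φ a - φ b‖ := by
      have hid : (t * s⁻¹) • a - b = e.symm ((t * s⁻¹) • T a - T b) := by
        rw [map_sub, map_smul, hsymmT, hsymmT]
      rw [hid]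
      refine le_trans (hesymm_norm _) ?_
      have hcoe : (((t * s⁻¹) • T a - T b : V) : Y) = t • (φ a - φ b) := by
        have hrhs : t • (φ a - φ b) = (t * s⁻¹) • ((T a : Y)) - (t * t⁻¹) • ((T b : Y)) := by
          rw [hφdef a, hφdef b]
          simp only [smul_sub, smul_smul]
          rfl
        rw [hrhs, mul_inv_cancel₀ (ne_of_gt ht0), one_smul]
        push_cast
        ring
      rw [hcoe, norm_smul, Real.norm_eq_abs, abs_of_pos ht0]
    have hnorm_ts : ‖(t * s⁻¹) • a‖ = t * s⁻¹ := by
      rw [norm_smul, Real.norm_eq_abs, abs_of_pos (by positivity), hnorm1 a ha, mul_one]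
    have hstep2 : |t * s⁻¹ - 1| ≤ t * ‖φ a - φ b‖ := by
      have h1 : |‖(t * s⁻¹) • a‖ - ‖b‖| ≤ ‖(t * s⁻¹) • a - b‖ := abs_norm_sub_norm_le _ _
      rw [hnorm_ts, hnorm1 b hb] at h1
      exact le_trans h1 hstep1
    have hstep3 : ‖a - (t * s⁻¹) • a‖ = |1 - t * s⁻¹| := by
      have h : a - (t * s⁻¹) • a = (1 - t * s⁻¹) • a := by rw [sub_smul, one_smul]
      rw [h, norm_smul, Real.norm_eq_abs, hnorm1 a ha, mul_one]
    calc ‖a - b‖ ≤ ‖a - (t * s⁻¹) • a‖ + ‖(t * s⁻¹) • a - b‖ :=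
          norm_sub_le_norm_sub_add_norm_sub a ((t * s⁻¹) • a) b
      _ ≤ |1 - t * s⁻¹| + t * ‖φ a - φ b‖ := by rw [hstep3]; gcongr
      _ ≤ t * ‖φ a - φ b‖ + t * ‖φ a - φ b‖ := by
          rw [abs_sub_comm]; exact add_le_add hstep2 le_rfl
      _ ≤ 2 * D * ‖φ a - φ b‖ := by
          have h0 : 0 ≤ ‖φ a - φ b‖ := norm_nonneg _
          nlinarith
  have hsep : ∀ p ∈ φ '' N, ∀ q ∈ φ '' N, p ≠ q → δ ≤ dist p q := by
    rintro p ⟨a, ha, rfl⟩ q ⟨b, hb, rfl⟩ hpq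
    have hab : a ≠ b := fun h => hpq (by rw [h])
    have h1 : ε ≤ dist a b := hN.2.1 a ha b hb hab
    rw [dist_eq_norm] at h1 ⊢
    have h2 := hkey a ha b hb
    rw [hδdef, div_le_iff₀ (by positivity)]
    nlinarith
  have hφN_sub : φ '' N ⊆ sphere (0:Y) 1 := by
    rintro p ⟨a, ha, rfl⟩; exact hφ_sphere a ha
  obtain ⟨M, hNM, hMnet⟩ := exists_net_of_separated' hδ (sphere (0:Y) 1) (φ '' N) hφN_sub hsep
  have hMsub : M ⊆ sphere (0:Y) 1 := hMnet.1
  -- selection of net points of N near given sphere points of X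
  have hexsel : ∀ x : X, ∃ a, a ∈ N ∧ (x ∈ sphere (0:X) 1 → dist x a ≤ ε) := by
    intro x
    by_cases hx : x ∈ sphere (0:X) 1
    · obtain ⟨a, haN, hda⟩ := hN.2.2 x hx
      exact ⟨a, haN, fun _ => hda⟩
    · exact ⟨a₀, ha₀, fun h => absurd h hx⟩
  choose sel hselN hselε using hexsel
  -- the auxiliary almost-extension data on the sphere of Y
  obtain ⟨tY, htYdef⟩ : ∃ t : sphere (0:Y) 1 → ℝ, ∀ y, t y = ‖(ψ y : Y)‖ :=
    ⟨_, fun _ => rfl⟩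
  obtain ⟨θ, hθdef⟩ : ∃ θ : sphere (0:Y) 1 → ℝ, ∀ y, θ y = min 1 (max 0 (2 * tY y - 1)) :=
    ⟨_, fun _ => rfl⟩
  obtain ⟨uX, huXdef⟩ : ∃ u : sphere (0:Y) 1 → X, ∀ y, u y = e.symm (ψ y) :=
    ⟨_, fun _ => rfl⟩
  obtain ⟨xs, hxsdef⟩ : ∃ x : sphere (0:Y) 1 → X, ∀ y, x y = ‖uX y‖⁻¹ • uX y :=
    ⟨_, fun _ => rfl⟩
  obtain ⟨bb, hbbdef⟩ : ∃ b : sphere (0:Y) 1 → X, ∀ y, b y = sel (xs y) :=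
    ⟨_, fun _ => rfl⟩
  have hbbN : ∀ y : sphere (0:Y) 1, bb y ∈ N := by
    intro y; rw [hbbdef y]; exact hselN (xs y)
  set z₀ : Z := f ⟨a₀, ha₀⟩ with hz₀def
  obtain ⟨g, hgdef⟩ : ∃ g : sphere (0:Y) 1 → Z,
      ∀ y, g y = z₀ + θ y • (f ⟨bb y, hbbN y⟩ - z₀) := ⟨_, fun _ => rfl⟩
  set c : ℝ := 16 * K * D with hcdef
  have hc0 : (0:ℝ) < c := by positivity
  clear_value c z₀
  -- basic estimates
  have hθ0 : ∀ y : sphere (0:Y) 1, 0 ≤ θ y := by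
    intro y; rw [hθdef y]
    exact le_min (by norm_num) (le_max_left _ _)
  have hθ1 : ∀ y : sphere (0:Y) 1, θ y ≤ 1 := by
    intro y; rw [hθdef y]; exact min_le_left _ _
  have hθzero : ∀ y : sphere (0:Y) 1, tY y ≤ 1/2 → θ y = 0 := by
    intro y hy; rw [hθdef y]
    have h : max 0 (2 * tY y - 1) = 0 := max_eq_left (by linarith)
    rw [h]
    exact min_eq_right (by norm_num)
  have hψdist : ∀ y y' : sphere (0:Y) 1, ‖(ψ y : Y) - (ψ y' : Y)‖ ≤ K * dist (y:Y) (y':Y) := by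
    intro y y'
    have h := hψ.dist_le_mul y y'
    rw [Real.coe_toNNReal K (by linarith)] at h
    rw [Subtype.dist_eq, Subtype.dist_eq] at h
    rw [← dist_eq_norm]
    exact h
  have hθlip : ∀ y y' : sphere (0:Y) 1, |θ y - θ y'| ≤ 2 * K * dist (y:Y) (y':Y) := by
    intro y y'
    rw [hθdef y, hθdef y']
    have h1 : |min 1 (max 0 (2 * tY y - 1)) - min 1 (max 0 (2 * tY y' - 1))|
        ≤ |max 0 (2 * tY y - 1) - max 0 (2 * tY y' - 1)| := by
      rw [min_comm 1 _, min_comm 1 _]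
      exact abs_min_sub_min' _ _ _
    have h2 : |max 0 (2 * tY y - 1) - max 0 (2 * tY y' - 1)|
        ≤ |(2 * tY y - 1) - (2 * tY y' - 1)| := by
      rw [max_comm 0 _, max_comm 0 _]
      exact abs_max_sub_max_le_abs _ _ _
    have h3 : |(2 * tY y - 1) - (2 * tY y' - 1)| = 2 * |tY y - tY y'| := by
      rw [show (2 * tY y - 1) - (2 * tY y' - 1) = 2 * (tY y - tY y') by ring, abs_mul]
      norm_num
    have h4 : |tY y - tY y'| ≤ ‖(ψ y : Y) - (ψ y' : Y)‖ := by
      rw [htYdef y, htYdef y']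
      exact abs_norm_sub_norm_le _ _
    have h5 := hψdist y y'
    calc |min 1 (max 0 (2 * tY y - 1)) - min 1 (max 0 (2 * tY y' - 1))|
        ≤ 2 * |tY y - tY y'| := by rw [← h3]; exact le_trans h1 h2
      _ ≤ 2 * (K * dist (y:Y) (y':Y)) := by have := le_trans h4 h5; linarith
      _ = 2 * K * dist (y:Y) (y':Y) := by ring
  have huXlip : ∀ y y' : sphere (0:Y) 1, ‖uX y - uX y'‖ ≤ K * dist (y:Y) (y':Y) := by
    intro y y'
    rw [huXdef y, huXdef y']
    have h1 : e.symm (ψ y) - e.symm (ψ y') = e.symm (ψ y - ψ y') := (map_sub _ _ _).symm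
    rw [h1]
    refine le_trans (hesymm_norm _) ?_
    push_cast
    exact hψdist y y'
  have huXlb : ∀ y : sphere (0:Y) 1, tY y ≤ D * ‖uX y‖ := by
    intro y
    have h := hesymm_lb (ψ y)
    rw [htYdef y, huXdef y]
    exact h
  have hxs_sphere : ∀ y : sphere (0:Y) 1, 1/2 < tY y → xs y ∈ sphere (0:X) 1 := by
    intro y hy
    have h1 : (0:ℝ) < ‖uX y‖ := by
      have := huXlb y; nlinarith
    rw [mem_sphere_zero_iff_norm, hxsdef y, norm_smul, Real.norm_eq_abs,
      abs_of_pos (inv_pos.mpr h1)]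
    field_simp
  have hbb_close : ∀ y : sphere (0:Y) 1, 1/2 < tY y → dist (xs y) (bb y) ≤ ε := by
    intro y hy
    rw [hbbdef y]
    exact hselε (xs y) (hxs_sphere y hy)
  have hxslip : ∀ y y' : sphere (0:Y) 1, 1/2 < tY y → 1/2 < tY y' →
      ‖xs y - xs y'‖ ≤ 4 * D * K * dist (y:Y) (y':Y) := by
    intro y y' hy hy'
    have hu : 1 < 2*D*‖uX y‖ := by
      have := huXlb y
      nlinarith
    have hu' : 1 < 2*D*‖uX y'‖ := by
      have := huXlb y'
      nlinarith
    have hd0 : 0 ≤ dist (y:Y) (y':Y) := dist_nonneg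
    have hgen : ∀ w w' : X, 1 < 2*D*‖w‖ → 1 < 2*D*‖w'‖ → ‖w'‖ ≤ ‖w‖ →
        ‖w - w'‖ ≤ K * dist (y:Y) (y':Y) →
        ‖‖w‖⁻¹ • w - ‖w'‖⁻¹ • w'‖ ≤ 4 * D * K * dist (y:Y) (y':Y) := by
      intro w w' hw hw' hle hlip
      have hw'0 : (0:ℝ) < ‖w'‖ := by nlinarith [norm_nonneg w']
      refine le_trans (normalize_sub_le' hw'0 hle) ?_
      have hw0 : (0:ℝ) < ‖w‖ := lt_of_lt_of_le hw'0 hle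
      have h2 : 2 / ‖w‖ ≤ 4 * D := by
        rw [div_le_iff₀ hw0]
        nlinarith
      have h4 : 0 ≤ ‖w - w'‖ := norm_nonneg _
      calc 2 / ‖w‖ * ‖w - w'‖ ≤ 4 * D * ‖w - w'‖ :=
            mul_le_mul_of_nonneg_right h2 h4
        _ ≤ 4 * D * (K * dist (y:Y) (y':Y)) :=
            mul_le_mul_of_nonneg_left hlip (by positivity)
        _ = 4 * D * K * dist (y:Y) (y':Y) := by ring
    rcases le_total ‖uX y'‖ ‖uX y‖ with h | h
    · rw [hxsdef y, hxsdef y']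
      exact hgen (uX y) (uX y') hu hu' h (huXlip y y')
    · rw [hxsdef y, hxsdef y', norm_sub_rev]
      refine hgen (uX y') (uX y) hu' hu h ?_
      rw [norm_sub_rev]
      exact huXlip y y'
  -- the Lipschitz estimate for g
  have hfdist : ∀ p q : N, ‖f p - f q‖ ≤ dist (p:X) (q:X) := by
    intro p q
    have h := hf.dist_le_mul p q
    rw [Subtype.dist_eq] at h
    rw [← dist_eq_norm]
    simpa using h
  have hfb2 : ∀ p q : N, ‖f p - f q‖ ≤ 2 := by
    intro p q
    refine le_trans (hfdist p q) ?_
    rw [dist_eq_norm]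
    calc ‖(p:X) - (q:X)‖ ≤ ‖(p:X)‖ + ‖(q:X)‖ := norm_sub_le _ _
      _ = 2 := by rw [hnorm1 _ p.2, hnorm1 _ q.2]; norm_num
  have hg_est : ∀ y y' : sphere (0:Y) 1,
      ‖g y - g y'‖ ≤ (4*D*K + 8*K) * dist (y:Y) (y':Y) + 2*ε := by
    intro y y'
    set d := dist (y:Y) (y':Y) with hddef
    have hd0 : 0 ≤ d := dist_nonneg
    have hid : g y - g y' = θ y • (f ⟨bb y, hbbN y⟩ - f ⟨bb y', hbbN y'⟩)
        + (θ y - θ y') • (f ⟨bb y', hbbN y'⟩ - z₀) := by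
      rw [hgdef y, hgdef y']
      module
    rw [hid]
    have hterm2 : ‖(θ y - θ y') • (f ⟨bb y', hbbN y'⟩ - z₀)‖ ≤ 4 * K * d := by
      rw [norm_smul, Real.norm_eq_abs]
      have h1 := hθlip y y'
      have h2 : ‖f ⟨bb y', hbbN y'⟩ - z₀‖ ≤ 2 := by rw [hz₀def]; exact hfb2 _ _
      have h3 : 0 ≤ |θ y - θ y'| := abs_nonneg _
      nlinarith [norm_nonneg (f ⟨bb y', hbbN y'⟩ - z₀)]
    have habs : 0 ≤ θ y := hθ0 y
    by_cases hy : 1/2 < tY y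
    · by_cases hy' : 1/2 < tY y'
      · have hbbd : ‖bb y - bb y'‖ ≤ 4*D*K*d + 2*ε := by
          calc ‖bb y - bb y'‖ ≤ ‖bb y - xs y‖ + ‖xs y - xs y'‖ + ‖xs y' - bb y'‖ := by
                have h1 := norm_sub_le_norm_sub_add_norm_sub (bb y) (xs y) (bb y')
                have h2 := norm_sub_le_norm_sub_add_norm_sub (xs y) (xs y') (bb y')
                linarith
            _ ≤ ε + 4*D*K*d + ε := by
                gcongr
                · rw [← dist_eq_norm, dist_comm]; exact hbb_close y hy
                · exact hxslip y y' hy hy'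
                · rw [← dist_eq_norm]; exact hbb_close y' hy'
            _ = 4*D*K*d + 2*ε := by ring
        have hterm1 : ‖θ y • (f ⟨bb y, hbbN y⟩ - f ⟨bb y', hbbN y'⟩)‖ ≤ 4*D*K*d + 2*ε := by
          rw [norm_smul, Real.norm_eq_abs, abs_of_nonneg habs]
          have h1 : ‖f ⟨bb y, hbbN y⟩ - f ⟨bb y', hbbN y'⟩‖ ≤ 4*D*K*d + 2*ε := by
            refine le_trans (hfdist _ _) ?_
            rw [dist_eq_norm]
            exact hbbd
          have h2 := hθ1 y
          nlinarith [norm_nonneg (f ⟨bb y, hbbN y⟩ - f ⟨bb y', hbbN y'⟩)]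
        calc ‖θ y • (f ⟨bb y, hbbN y⟩ - f ⟨bb y', hbbN y'⟩)
              + (θ y - θ y') • (f ⟨bb y', hbbN y'⟩ - z₀)‖
            ≤ ‖θ y • (f ⟨bb y, hbbN y⟩ - f ⟨bb y', hbbN y'⟩)‖
              + ‖(θ y - θ y') • (f ⟨bb y', hbbN y'⟩ - z₀)‖ := norm_add_le _ _
          _ ≤ (4*D*K*d + 2*ε) + 4*K*d := add_le_add hterm1 hterm2
          _ ≤ (4*D*K + 8*K) * d + 2*ε := by nlinarith
      · push_neg at hy'
        have hθy' : θ y' = 0 := hθzero y' hy'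
        have hθysmall : θ y ≤ 2 * K * d := by
          have h := hθlip y y'
          rw [hθy', sub_zero, abs_of_nonneg habs] at h
          exact h
        have hterm1 : ‖θ y • (f ⟨bb y, hbbN y⟩ - f ⟨bb y', hbbN y'⟩)‖ ≤ 4*K*d := by
          rw [norm_smul, Real.norm_eq_abs, abs_of_nonneg habs]
          have h2 : ‖f ⟨bb y, hbbN y⟩ - f ⟨bb y', hbbN y'⟩‖ ≤ 2 := hfb2 _ _
          nlinarith [norm_nonneg (f ⟨bb y, hbbN y⟩ - f ⟨bb y', hbbN y'⟩)]
        calc ‖θ y • (f ⟨bb y, hbbN y⟩ - f ⟨bb y', hbbN y'⟩)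
              + (θ y - θ y') • (f ⟨bb y', hbbN y'⟩ - z₀)‖
            ≤ ‖θ y • (f ⟨bb y, hbbN y⟩ - f ⟨bb y', hbbN y'⟩)‖
              + ‖(θ y - θ y') • (f ⟨bb y', hbbN y'⟩ - z₀)‖ := norm_add_le _ _
          _ ≤ 4*K*d + 4*K*d := add_le_add hterm1 hterm2
          _ ≤ (4*D*K + 8*K) * d + 2*ε := by nlinarith
    · push_neg at hy
      have hθy : θ y = 0 := hθzero y hy
      have h0 : θ y • (f ⟨bb y, hbbN y⟩ - f ⟨bb y', hbbN y'⟩) = 0 := by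
        rw [hθy, zero_smul]
      rw [h0, zero_add]
      refine le_trans hterm2 ?_
      nlinarith
  -- the 1-Lipschitz function on the net M
  obtain ⟨g₁, hg₁def⟩ : ∃ g₁ : M → Z,
      ∀ m : M, g₁ m = c⁻¹ • g ⟨(m : Y), hMsub m.2⟩ := ⟨_, fun _ => rfl⟩
  have hg₁lip : LipschitzWith 1 g₁ := by
    apply LipschitzWith.of_dist_le_mul
    intro m m'
    rcases eq_or_ne m m' with rfl | hmm
    · simp
    · have hcoene : (m : Y) ≠ (m' : Y) := fun h => hmm (Subtype.ext h)
      have hsepm : δ ≤ dist (m : Y) (m' : Y) := hMnet.2.1 _ m.2 _ m'.2 hcoene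
      rw [hg₁def m, hg₁def m', dist_eq_norm]
      have hid : c⁻¹ • g ⟨(m : Y), hMsub m.2⟩ - c⁻¹ • g ⟨(m' : Y), hMsub m'.2⟩
          = c⁻¹ • (g ⟨(m : Y), hMsub m.2⟩ - g ⟨(m' : Y), hMsub m'.2⟩) := (smul_sub _ _ _).symm
      rw [hid, norm_smul, Real.norm_eq_abs, abs_of_pos (inv_pos.mpr hc0)]
      have h1 := hg_est ⟨(m : Y), hMsub m.2⟩ ⟨(m' : Y), hMsub m'.2⟩
      simp only at h1
      have h2ε : 2 * ε ≤ 4 * D * dist (m : Y) (m' : Y) := by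
        rw [hδdef] at hsepm
        rw [div_le_iff₀ (by positivity : (0:ℝ) < 2*D)] at hsepm
        nlinarith
      have hd0 : (0:ℝ) ≤ dist (m : Y) (m' : Y) := dist_nonneg
      have h3 : ‖g ⟨(m : Y), hMsub m.2⟩ - g ⟨(m' : Y), hMsub m'.2⟩‖
          ≤ c * dist (m : Y) (m' : Y) := by
        refine le_trans h1 ?_
        rw [hcdef]
        have hcoef : 4*D*K + 8*K + 4*D ≤ 16*K*D := by nlinarith
        have hmul := mul_le_mul_of_nonneg_right hcoef hd0
        nlinarith [hmul]
      rw [NNReal.coe_one, one_mul, Subtype.dist_eq]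
      calc c⁻¹ * ‖g ⟨(m : Y), hMsub m.2⟩ - g ⟨(m' : Y), hMsub m'.2⟩‖
          ≤ c⁻¹ * (c * dist (m : Y) (m' : Y)) :=
            mul_le_mul_of_nonneg_left h3 (le_of_lt (inv_pos.mpr hc0))
        _ = dist (m : Y) (m' : Y) := by field_simp
  obtain ⟨F₁, hF₁lip, hF₁apx⟩ := hY δ hδ Z M hMnet g₁ hg₁lip
  -- the final extension
  refine ⟨fun x => c • F₁ ((max 1 ‖(T x : Y)‖)⁻¹ • (T x : Y)), ?_, ?_⟩
  · -- Lipschitz estimate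
    apply LipschitzWith.of_dist_le_mul
    intro x x'
    have hcoe : (((90 * K * D ^ 2 * L).toNNReal : NNReal) : ℝ) = 90 * K * D ^ 2 * L := by
      rw [Real.coe_toNNReal _ (by positivity)]
    rw [hcoe, dist_eq_norm]
    have hid : c • F₁ ((max 1 ‖(T x : Y)‖)⁻¹ • (T x : Y))
        - c • F₁ ((max 1 ‖(T x' : Y)‖)⁻¹ • (T x' : Y))
        = c • (F₁ ((max 1 ‖(T x : Y)‖)⁻¹ • (T x : Y))
          - F₁ ((max 1 ‖(T x' : Y)‖)⁻¹ • (T x' : Y))) := (smul_sub _ _ _).symm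
    rw [hid, norm_smul, Real.norm_eq_abs, abs_of_pos hc0]
    have h1 : dist (F₁ ((max 1 ‖(T x : Y)‖)⁻¹ • (T x : Y)))
        (F₁ ((max 1 ‖(T x' : Y)‖)⁻¹ • (T x' : Y)))
        ≤ L * dist ((max 1 ‖(T x : Y)‖)⁻¹ • (T x : Y)) ((max 1 ‖(T x' : Y)‖)⁻¹ • (T x' : Y)) := by
      have h := hF₁lip.dist_le_mul ((max 1 ‖(T x : Y)‖)⁻¹ • (T x : Y))
        ((max 1 ‖(T x' : Y)‖)⁻¹ • (T x' : Y))
      rwa [Real.coe_toNNReal L (by linarith)] at h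
    have h2 : dist ((max 1 ‖(T x : Y)‖)⁻¹ • (T x : Y)) ((max 1 ‖(T x' : Y)‖)⁻¹ • (T x' : Y))
        ≤ 2 * ‖(T x : Y) - (T x' : Y)‖ := by
      rw [dist_eq_norm]
      exact radial_lip' _ _
    have h3 : ‖(T x : Y) - (T x' : Y)‖ ≤ D * ‖x - x'‖ := by
      have h4 := hT2 (x - x')
      rw [Submodule.coe_norm] at h4
      have h5 : ((T (x - x') : V) : Y) = (T x : Y) - (T x' : Y) := by
        rw [map_sub]; push_cast; ring
      rwa [h5] at h4
    rw [← dist_eq_norm]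
    have hd0 : (0:ℝ) ≤ dist x x' := dist_nonneg
    have hdd : dist x x' = ‖x - x'‖ := dist_eq_norm x x'
    have hdF : dist (F₁ ((max 1 ‖(T x : Y)‖)⁻¹ • (T x : Y)))
        (F₁ ((max 1 ‖(T x' : Y)‖)⁻¹ • (T x' : Y))) ≤ L * (2 * (D * dist x x')) := by
      refine le_trans h1 ?_
      have h6 : 2 * ‖(T x : Y) - (T x' : Y)‖ ≤ 2 * (D * dist x x') := by
        rw [hdd]; linarith
      have h7 := le_trans h2 h6
      nlinarith [dist_nonneg (x := (max 1 ‖(T x : Y)‖)⁻¹ • (T x : Y))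
        (y := (max 1 ‖(T x' : Y)‖)⁻¹ • (T x' : Y))]
    have hdF0 : (0:ℝ) ≤ dist (F₁ ((max 1 ‖(T x : Y)‖)⁻¹ • (T x : Y)))
        (F₁ ((max 1 ‖(T x' : Y)‖)⁻¹ • (T x' : Y))) := dist_nonneg
    rw [dist_eq_norm] at hdF hdF0 ⊢
    nlinarith
  · -- approximation estimate
    intro a
    have haN : (a : X) ∈ N := a.2
    have hsY : φ (a : X) ∈ sphere (0:Y) 1 := hφ_sphere _ haN
    have hmM : φ (a : X) ∈ M := hNM ⟨(a : X), haN, rfl⟩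
    have hTa : 1 ≤ ‖(T (a : X) : Y)‖ := hTa1 _ haN
    have hmax : max 1 ‖(T (a : X) : Y)‖ = ‖(T (a : X) : Y)‖ := max_eq_right hTa
    have hFval : (max 1 ‖(T (a : X) : Y)‖)⁻¹ • (T (a : X) : Y) = φ (a : X) := by
      rw [hmax, hφdef]
    have hsnorm : (0:ℝ) < ‖(T (a:X) : Y)‖ := lt_of_lt_of_le one_pos hTa
    have hψval : ψ ⟨φ (a : X), hsY⟩ = ⟨φ (a : X), hφ_V (a : X)⟩ := by
      apply Subtype.ext
      exact hψid ⟨φ (a : X), hsY⟩ (hφ_V (a : X))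
    have huXa : uX ⟨φ (a : X), hsY⟩ = ‖(T (a:X) : Y)‖⁻¹ • (a : X) := by
      rw [huXdef, hψval]
      have hVeq : (⟨φ (a : X), hφ_V (a : X)⟩ : V) = ‖(T (a:X) : Y)‖⁻¹ • T (a : X) := by
        apply Subtype.ext
        push_cast
        rw [hφdef]
      rw [hVeq, map_smul, hsymmT]
    have hxsa : xs ⟨φ (a : X), hsY⟩ = (a : X) := by
      rw [hxsdef, huXa]
      rw [norm_smul, Real.norm_eq_abs, abs_of_pos (inv_pos.mpr hsnorm), hnorm1 _ haN, mul_one,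
        inv_inv, smul_smul, mul_inv_cancel₀ (ne_of_gt hsnorm), one_smul]
    have htYa : tY ⟨φ (a : X), hsY⟩ = 1 := by
      rw [htYdef, hψval]
      exact mem_sphere_zero_iff_norm.mp hsY
    have hθa : θ ⟨φ (a : X), hsY⟩ = 1 := by
      rw [hθdef, htYa]
      norm_num
    have hga : g ⟨φ (a : X), hsY⟩ = f ⟨bb ⟨φ (a : X), hsY⟩, hbbN _⟩ := by
      rw [hgdef, hθa, one_smul]
      abel
    have hgfa : ‖g ⟨φ (a : X), hsY⟩ - f a‖ ≤ ε := by
      rw [hga]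
      refine le_trans (hfdist _ _) ?_
      simp only [hbbdef, hxsa]
      rw [dist_comm]
      exact hselε (a : X) (hN.1 haN)
    have happrox := hF₁apx ⟨φ (a : X), hmM⟩
    have hg₁val : (g₁ ⟨φ (a : X), hmM⟩ : Z) = c⁻¹ • g ⟨φ (a : X), hsY⟩ := by
      rw [hg₁def]
    calc ‖c • F₁ ((max 1 ‖(T (a:X) : Y)‖)⁻¹ • (T (a:X) : Y)) - f a‖
        = ‖c • F₁ (φ (a : X)) - f a‖ := by rw [hFval]
      _ ≤ ‖c • F₁ (φ (a : X)) - c • (g₁ ⟨φ (a : X), hmM⟩ : Z)‖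
          + ‖c • (g₁ ⟨φ (a : X), hmM⟩ : Z) - f a‖ :=
          norm_sub_le_norm_sub_add_norm_sub _ _ _
      _ ≤ c * (A * δ) + ε := by
          gcongr
          · rw [← smul_sub, norm_smul, Real.norm_eq_abs, abs_of_pos hc0]
            have h0 : (0:ℝ) ≤ A * δ := by positivity
            nlinarith [happrox]
          · rw [hg₁val, smul_inv_smul₀ (ne_of_gt hc0)]
            exact hgfa
      _ ≤ 9 * K * A * ε := by
          simp only [hcdef, hδdef]
          have h1 : 16 * K * D * (A * (ε / (2 * D))) = 8 * K * A * ε := by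
            field_simp; ring
          rw [h1]
          have hKA : 1 ≤ K * A := by nlinarith
          nlinarith [mul_le_mul_of_nonneg_right hKA (le_of_lt hε)]
end

section
/- Let (X,‖·‖_X) and (Y,‖·‖_Y) be real normed spaces with dim(X) = dim(Y) = n < ∞. Suppose D ≥ 1, σ > 0, and φ : S_X → S_Y is a bijection satisfying σ·‖x − x'‖_X ≤ ‖φ(x) − φ(x')‖_Y ≤ D·σ·‖x − x'‖_X for all x, x' ∈ S_X. Then there exists a linear bijection T : X → Y with ‖T‖_{X→Y} · ‖T⁻¹‖_{Y→X} ≤ 9D, i.e. the Banach–Mazur distance between X and Y is at most 9 times the bi-Lipschitz distance between their unit spheres. -/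
open Metric Filter Topology Classical

section Aux

variable {X Y : Type*} [NormedAddCommGroup X] [NormedSpace ℝ X]
  [NormedAddCommGroup Y] [NormedSpace ℝ Y]

private lemma mem_sphere_normalize {x : X} (hx : x ≠ 0) :
    ‖x‖⁻¹ • x ∈ Metric.sphere (0 : X) 1 := by
  rw [mem_sphere_zero_iff_norm, norm_smul, norm_inv, norm_norm,
    inv_mul_cancel₀ (norm_ne_zero_iff.mpr hx)]

private lemma norm_coe_sphere (a : Metric.sphere (0 : X) 1) : ‖(a : X)‖ = 1 :=
  mem_sphere_zero_iff_norm.mp a.2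

/-- Positively homogeneous extension of a map between unit spheres. -/
noncomputable def homExt (f : Metric.sphere (0 : X) 1 → Metric.sphere (0 : Y) 1) : X → Y :=
  fun x => if hx : x = 0 then 0 else
    ‖x‖ • ((f ⟨‖x‖⁻¹ • x, mem_sphere_normalize hx⟩ : Metric.sphere (0 : Y) 1) : Y)

private lemma homExt_zero (f : Metric.sphere (0 : X) 1 → Metric.sphere (0 : Y) 1) :
    homExt f 0 = 0 := by rw [homExt]; exact dif_pos rfl

private lemma homExt_apply (f : Metric.sphere (0 : X) 1 → Metric.sphere (0 : Y) 1)
    {x : X} (hx : x ≠ 0) :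
    homExt f x
      = ‖x‖ • ((f ⟨‖x‖⁻¹ • x, mem_sphere_normalize hx⟩ : Metric.sphere (0 : Y) 1) : Y) := by
  rw [homExt]; exact dif_neg hx

private lemma norm_homExt (f : Metric.sphere (0 : X) 1 → Metric.sphere (0 : Y) 1) (x : X) :
    ‖homExt f x‖ = ‖x‖ := by
  by_cases hx : x = 0
  · simp [hx, homExt_zero]
  · rw [homExt_apply f hx, norm_smul, norm_norm, norm_coe_sphere, mul_one]

/-- Key geometric estimate: `‖x‖ • x̂ - ‖x‖ • x̂'` has norm at most `2‖x - x'‖`. -/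
private lemma norm_smul_normalize_sub {x x' : X} (hx : x ≠ 0) (hx' : x' ≠ 0) :
    ‖x‖ * ‖(‖x‖⁻¹ • x) - (‖x'‖⁻¹ • x')‖ ≤ 2 * ‖x - x'‖ := by
  have hnx : ‖x‖ ≠ 0 := norm_ne_zero_iff.mpr hx
  have hnx' : ‖x'‖ ≠ 0 := norm_ne_zero_iff.mpr hx'
  have h1 : ‖x‖ • (‖x‖⁻¹ • x) = x := by
    rw [smul_smul, mul_inv_cancel₀ hnx, one_smul]
  have h2 : ‖x‖ • (‖x'‖⁻¹ • x') = (‖x‖ * ‖x'‖⁻¹) • x' := by rw [smul_smul]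
  have h3 : ‖x' - (‖x‖ * ‖x'‖⁻¹) • x'‖ = |‖x'‖ - ‖x‖| := by
    have : x' - (‖x‖ * ‖x'‖⁻¹) • x' = (1 - ‖x‖ * ‖x'‖⁻¹) • x' := by
      rw [sub_smul, one_smul]
    rw [this, norm_smul, Real.norm_eq_abs]
    rw [show (1 - ‖x‖ * ‖x'‖⁻¹) = (‖x'‖ - ‖x‖) * ‖x'‖⁻¹ by field_simp]
    rw [abs_mul, abs_inv, abs_norm, mul_assoc, inv_mul_cancel₀ hnx', mul_one]
  calc ‖x‖ * ‖(‖x‖⁻¹ • x) - (‖x'‖⁻¹ • x')‖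
      = ‖‖x‖ • (‖x‖⁻¹ • x) - ‖x‖ • (‖x'‖⁻¹ • x')‖ := by
        rw [← smul_sub, norm_smul, norm_norm]
    _ = ‖x - (‖x‖ * ‖x'‖⁻¹) • x'‖ := by rw [h1, h2]
    _ ≤ ‖x - x'‖ + ‖x' - (‖x‖ * ‖x'‖⁻¹) • x'‖ := by
        have := norm_sub_le_norm_sub_add_norm_sub x x' ((‖x‖ * ‖x'‖⁻¹) • x')
        exact this
    _ ≤ ‖x - x'‖ + ‖x - x'‖ := by
        rw [h3]
        have := abs_norm_sub_norm_le x' x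
        rw [norm_sub_rev x' x] at this
        linarith
    _ = 2 * ‖x - x'‖ := by ring

/-- The homogeneous extension of a `K`-Lipschitz sphere map (with `K ≥ 1`) is
`3K`-Lipschitz. -/
private lemma homExt_lipschitz (f : Metric.sphere (0 : X) 1 → Metric.sphere (0 : Y) 1)
    (K : ℝ) (hK : 1 ≤ K)
    (hf : ∀ a b : Metric.sphere (0 : X) 1, ‖(f a : Y) - (f b : Y)‖ ≤ K * ‖(a : X) - (b : X)‖) :
    ∀ x x' : X, ‖homExt f x - homExt f x'‖ ≤ 3 * K * ‖x - x'‖ := by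
  intro x x'
  by_cases hx : x = 0
  · subst hx
    rw [homExt_zero, zero_sub, norm_neg, norm_homExt, zero_sub, norm_neg]
    nlinarith [norm_nonneg x']
  by_cases hx' : x' = 0
  · subst hx'
    rw [homExt_zero, sub_zero, norm_homExt, sub_zero]
    nlinarith [norm_nonneg x]
  set a : Metric.sphere (0 : X) 1 := ⟨‖x‖⁻¹ • x, mem_sphere_normalize hx⟩ with ha
  set b : Metric.sphere (0 : X) 1 := ⟨‖x'‖⁻¹ • x', mem_sphere_normalize hx'⟩ with hb
  rw [homExt_apply f hx, homExt_apply f hx']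
  have key : ‖x‖ * ‖(a : X) - (b : X)‖ ≤ 2 * ‖x - x'‖ := norm_smul_normalize_sub hx hx'
  have h4 : ‖‖x‖ • (f a : Y) - ‖x'‖ • (f b : Y)‖
      ≤ ‖x‖ * ‖(f a : Y) - (f b : Y)‖ + |‖x‖ - ‖x'‖| := by
    calc ‖‖x‖ • (f a : Y) - ‖x'‖ • (f b : Y)‖
        ≤ ‖‖x‖ • (f a : Y) - ‖x‖ • (f b : Y)‖ + ‖‖x‖ • (f b : Y) - ‖x'‖ • (f b : Y)‖ :=
          norm_sub_le_norm_sub_add_norm_sub _ _ _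
      _ = ‖x‖ * ‖(f a : Y) - (f b : Y)‖ + |‖x‖ - ‖x'‖| := by
          rw [← smul_sub, norm_smul, norm_norm, ← sub_smul, norm_smul, Real.norm_eq_abs,
            norm_coe_sphere, mul_one]
  have h5 : ‖x‖ * ‖(f a : Y) - (f b : Y)‖ ≤ K * (2 * ‖x - x'‖) := by
    calc ‖x‖ * ‖(f a : Y) - (f b : Y)‖
        ≤ ‖x‖ * (K * ‖(a : X) - (b : X)‖) :=
          mul_le_mul_of_nonneg_left (hf a b) (norm_nonneg x)
      _ = K * (‖x‖ * ‖(a : X) - (b : X)‖) := by ring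
      _ ≤ K * (2 * ‖x - x'‖) := by
          apply mul_le_mul_of_nonneg_left key (by linarith)
  have h6 : |‖x‖ - ‖x'‖| ≤ ‖x - x'‖ := abs_norm_sub_norm_le x x'
  have h7 : 0 ≤ ‖x - x'‖ := norm_nonneg _
  nlinarith [h4, h5, h6]

/-- Compatibility of homogeneous extensions with composition with inverse. -/
private lemma homExt_comp (φ : Metric.sphere (0 : X) 1 → Metric.sphere (0 : Y) 1)
    (ψ : Metric.sphere (0 : Y) 1 → Metric.sphere (0 : X) 1)
    (hψφ : ∀ a, ψ (φ a) = a) (x : X) : homExt ψ (homExt φ x) = x := by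
  by_cases hx : x = 0
  · simp [hx, homExt_zero]
  have hnx : ‖x‖ ≠ 0 := norm_ne_zero_iff.mpr hx
  set a : Metric.sphere (0 : X) 1 := ⟨‖x‖⁻¹ • x, mem_sphere_normalize hx⟩ with ha
  have hPhi : homExt φ x = ‖x‖ • ((φ a : Y)) := homExt_apply φ hx
  have hPhine : homExt φ x ≠ 0 := by
    rw [← norm_ne_zero_iff, norm_homExt]; exact hnx
  rw [homExt_apply ψ hPhine]
  have hcoe : (⟨‖homExt φ x‖⁻¹ • homExt φ x, mem_sphere_normalize hPhine⟩ :
      Metric.sphere (0 : Y) 1) = φ a := by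
    apply Subtype.ext
    show ‖homExt φ x‖⁻¹ • homExt φ x = (φ a : Y)
    rw [norm_homExt, hPhi, smul_smul, inv_mul_cancel₀ hnx, one_smul]
  rw [hcoe, hψφ, norm_homExt]
  show ‖x‖ • (‖x‖⁻¹ • x) = x
  rw [smul_smul, mul_inv_cancel₀ hnx, one_smul]

end Aux

/-- **Second half of Lemma 2.10.** If `X, Y` are `n`-dimensional normed spaces whose
unit spheres admit a bijection `φ` with `σ‖x - x'‖ ≤ ‖φ(x) - φ(x')‖ ≤ Dσ‖x - x'‖`,
then there is a linear bijection `T : X → Y` with `‖T‖·‖T⁻¹‖ ≤ 9D`, i.e. the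
Banach–Mazur distance between `X` and `Y` is at most `9` times the bi-Lipschitz
distance between their unit spheres. -/
theorem banachMazur_le_sphere_lipschitz_distance {X Y : Type*}
    [NormedAddCommGroup X] [NormedSpace ℝ X] [NormedAddCommGroup Y] [NormedSpace ℝ Y]
    [FiniteDimensional ℝ X] [FiniteDimensional ℝ Y]
    (n : ℕ) (hX : Module.finrank ℝ X = n) (hY : Module.finrank ℝ Y = n)
    (D σ : ℝ) (hD : 1 ≤ D) (hσ : 0 < σ)
    (φ : Metric.sphere (0 : X) 1 → Metric.sphere (0 : Y) 1)
    (hφbij : Function.Bijective φ)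
    (hφlow : ∀ x x' : Metric.sphere (0 : X) 1,
      σ * ‖(x : X) - (x' : X)‖ ≤ ‖(φ x : Y) - (φ x' : Y)‖)
    (hφup : ∀ x x' : Metric.sphere (0 : X) 1,
      ‖(φ x : Y) - (φ x' : Y)‖ ≤ D * σ * ‖(x : X) - (x' : X)‖) :
    ∃ T : X ≃ₗ[ℝ] Y, ∃ s : ℝ, 0 < s ∧
      ∀ x : X, s * ‖x‖ ≤ ‖T x‖ ∧ ‖T x‖ ≤ 9 * D * s * ‖x‖ := by
  rcases Nat.eq_zero_or_pos n with hn | hn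
  · -- degenerate case: both spaces are trivial
    subst hn
    have hsX : Subsingleton X := Module.finrank_zero_iff.mp hX
    have hsY : Subsingleton Y := Module.finrank_zero_iff.mp hY
    refine ⟨LinearEquiv.ofSubsingleton X Y, 1, one_pos, fun x => ?_⟩
    have hx0 : x = 0 := Subsingleton.elim x 0
    subst hx0
    simp
  -- main case: `n ≥ 1`
  have hXpos : 0 < Module.finrank ℝ X := by rw [hX]; exact hn
  have hYpos : 0 < Module.finrank ℝ Y := by rw [hY]; exact hn
  have hXnt : Nontrivial X := Module.nontrivial_of_finrank_pos hXpos
  have hYnt : Nontrivial Y := Module.nontrivial_of_finrank_pos hYpos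
  -- the inverse bijection of spheres
  set e := Equiv.ofBijective φ hφbij with he
  set ψ : Metric.sphere (0 : Y) 1 → Metric.sphere (0 : X) 1 := fun b => e.symm b with hψdef
  have hψφ : ∀ a, ψ (φ a) = a := fun a => e.symm_apply_apply a
  have hφψ : ∀ b, φ (ψ b) = b := fun b => e.apply_symm_apply b
  -- `σ ≤ 1`
  obtain ⟨xu, hxu⟩ := exists_norm_eq X (zero_le_one)
  have hσ1 : σ ≤ 1 := by
    set p : Metric.sphere (0 : X) 1 := ⟨xu, by rw [mem_sphere_zero_iff_norm]; exact hxu⟩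
    set q : Metric.sphere (0 : X) 1 := ⟨-xu, by rw [mem_sphere_zero_iff_norm, norm_neg]; exact hxu⟩
    have h1 := hφlow p q
    have h2 : ‖(p : X) - (q : X)‖ = 2 := by
      show ‖xu - -xu‖ = 2
      rw [sub_neg_eq_add, ← two_smul ℝ, norm_smul]
      simp [hxu]
    have h3 : ‖(φ p : Y) - (φ q : Y)‖ ≤ 2 := by
      have := norm_sub_le (φ p : Y) (φ q : Y)
      rw [norm_coe_sphere, norm_coe_sphere] at this
      linarith
    rw [h2] at h1
    linarith
  -- `1 ≤ D * σ`
  obtain ⟨yu, hyu⟩ := exists_norm_eq Y (zero_le_one)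
  have hDσ : 1 ≤ D * σ := by
    set p : Metric.sphere (0 : Y) 1 := ⟨yu, by rw [mem_sphere_zero_iff_norm]; exact hyu⟩
    set q : Metric.sphere (0 : Y) 1 := ⟨-yu, by rw [mem_sphere_zero_iff_norm, norm_neg]; exact hyu⟩
    have h1 := hφup (ψ p) (ψ q)
    rw [hφψ p, hφψ q] at h1
    have h2 : ‖(p : Y) - (q : Y)‖ = 2 := by
      show ‖yu - -yu‖ = 2
      rw [sub_neg_eq_add, ← two_smul ℝ, norm_smul]
      simp [hyu]
    have h3 : ‖((ψ p : X)) - ((ψ q : X))‖ ≤ 2 := by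
      have := norm_sub_le (ψ p : X) (ψ q : X)
      rw [norm_coe_sphere, norm_coe_sphere] at this
      linarith
    rw [h2] at h1
    nlinarith [mul_pos (lt_of_lt_of_le one_pos hD) hσ]
  have hDσpos : 0 < D * σ := lt_of_lt_of_le one_pos hDσ
  -- Lipschitz bound on ψ
  have hψlip : ∀ a b : Metric.sphere (0 : Y) 1,
      ‖(ψ a : X) - (ψ b : X)‖ ≤ σ⁻¹ * ‖(a : Y) - (b : Y)‖ := by
    intro a b
    have h1 := hφlow (ψ a) (ψ b)
    rw [hφψ a, hφψ b] at h1
    rw [← inv_mul_cancel_left₀ (ne_of_gt hσ) ‖(ψ a : X) - (ψ b : X)‖]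
    exact mul_le_mul_of_nonneg_left h1 (le_of_lt (inv_pos.mpr hσ))
  have hσinv1 : 1 ≤ σ⁻¹ := by
    rw [le_inv_comm₀ one_pos hσ]; simpa using hσ1
  -- the homogeneous extensions
  have hPhiup : ∀ x x' : X, ‖homExt φ x - homExt φ x'‖ ≤ 3 * (D * σ) * ‖x - x'‖ :=
    homExt_lipschitz φ (D * σ) hDσ hφup
  have hPsiup : ∀ y y' : Y, ‖homExt ψ y - homExt ψ y'‖ ≤ 3 * σ⁻¹ * ‖y - y'‖ :=
    homExt_lipschitz ψ σ⁻¹ hσinv1 hψlip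
  have hPhilow : ∀ x x' : X, σ / 3 * ‖x - x'‖ ≤ ‖homExt φ x - homExt φ x'‖ := by
    intro x x'
    have h1 := hPsiup (homExt φ x) (homExt φ x')
    rw [homExt_comp φ ψ hψφ x, homExt_comp φ ψ hψφ x'] at h1
    have h2 : σ / 3 * (3 * σ⁻¹) = 1 := by field_simp
    calc σ / 3 * ‖x - x'‖ ≤ σ / 3 * (3 * σ⁻¹ * ‖homExt φ x - homExt φ x'‖) := by
          apply mul_le_mul_of_nonneg_left h1 (by positivity)
      _ = ‖homExt φ x - homExt φ x'‖ := by
          rw [← mul_assoc, h2, one_mul]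
  -- Rademacher: Φ is differentiable somewhere
  borelize X
  set b := Module.Basis.ofVectorSpace ℝ X with hbdef
  set μ := b.addHaar with hμdef
  have hPhilipW : LipschitzWith (⟨3 * (D * σ), by positivity⟩ : NNReal) (homExt φ) :=
    LipschitzWith.of_dist_le_mul (fun x y => by
      rw [dist_eq_norm, dist_eq_norm]; exact hPhiup x y)
  have hae := hPhilipW.ae_differentiableAt (μ := μ)
  have hμne : μ ≠ 0 := by
    intro h
    rw [hμdef] at h
    have h1 := b.addHaar_self
    rw [h] at h1
    simp at h1
  have hNeBot : (MeasureTheory.ae μ).NeBot := MeasureTheory.ae_neBot.2 hμne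
  obtain ⟨x₀, hx₀⟩ := hae.exists
  have hd : HasFDerivAt (homExt φ) (fderiv ℝ (homExt φ) x₀) x₀ := hx₀.hasFDerivAt
  set T' := fderiv ℝ (homExt φ) x₀ with hT'def
  -- operator norm bound
  have hT'norm : ‖T'‖ ≤ 3 * (D * σ) := by
    have := hd.le_of_lipschitz hPhilipW
    exact this
  -- pointwise lower bound on the derivative
  have hT'low : ∀ v : X, σ / 3 * ‖v‖ ≤ ‖T' v‖ := by
    intro v
    have h1 : HasDerivAt (fun t : ℝ => x₀ + t • v) v 0 := by
      simpa using ((hasDerivAt_id (0 : ℝ)).smul_const v).const_add x₀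
    have hd' : HasFDerivAt  (homExt φ) T' (x₀ + (0 : ℝ) • v) := by simpa using hd
    have hline : HasDerivAt (fun t : ℝ => homExt φ (x₀ + t • v)) (T' v) 0 := by
      have := hd'.comp_hasDerivAt (0 : ℝ) h1
      exact this
    rw [hasDerivAt_iff_tendsto_slope] at hline
    have htend : Tendsto (fun t => ‖slope (fun t : ℝ => homExt φ (x₀ + t • v)) 0 t‖)
        (𝓝[>] (0 : ℝ)) (𝓝 ‖T' v‖) := by
      apply (hline.norm).mono_left
      apply nhdsWithin_mono
      intro t ht
      exact ne_of_gt ht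
    refine ge_of_tendsto htend ?_
    filter_upwards [self_mem_nhdsWithin] with t ht
    have htpos : (0 : ℝ) < t := ht
    have hs : slope (fun t : ℝ => homExt φ (x₀ + t • v)) 0 t
        = t⁻¹ • (homExt φ (x₀ + t • v) - homExt φ (x₀ + (0 : ℝ) • v)) := by
      rw [slope_def_module]
      simp
    rw [hs]
    have h2 := hPhilow (x₀ + t • v) (x₀ + (0 : ℝ) • v)
    have h3 : ‖(x₀ + t • v) - (x₀ + (0 : ℝ) • v)‖ = t * ‖v‖ := by
      simp [norm_smul, abs_of_pos htpos]
    rw [h3] at h2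
    rw [norm_smul, Real.norm_eq_abs, abs_inv, abs_of_pos htpos]
    rw [← mul_le_mul_iff_right₀ htpos]
    calc t * (σ / 3 * ‖v‖) = σ / 3 * (t * ‖v‖) := by ring
      _ ≤ ‖homExt φ (x₀ + t • v) - homExt φ (x₀ + (0 : ℝ) • v)‖ := h2
      _ = t * (t⁻¹ * ‖homExt φ (x₀ + t • v) - homExt φ (x₀ + (0 : ℝ) • v)‖) := by
          rw [← mul_assoc, mul_inv_cancel₀ (ne_of_gt htpos), one_mul]
  -- T' is injective
  have hinj : Function.Injective ((T' : X →ₗ[ℝ] Y) : X → Y) := by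
    intro u w h
    have h1 := hT'low (u - w)
    have h2 : T' (u - w) = 0 := by
      rw [map_sub]
      have : T' u = T' w := h
      rw [this, sub_self]
    rw [h2, norm_zero] at h1
    have h3 : ‖u - w‖ ≤ 0 := by nlinarith [norm_nonneg (u - w)]
    have h4 : u - w = 0 := norm_le_zero_iff.mp h3
    exact sub_eq_zero.mp h4
  refine ⟨LinearMap.linearEquivOfInjective (T' : X →ₗ[ℝ] Y) hinj (hX.trans hY.symm),
    σ / 3, by positivity, fun x => ?_⟩
  have happ : (LinearMap.linearEquivOfInjective (T' : X →ₗ[ℝ] Y) hinj (hX.trans hY.symm)) x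
      = T' x := rfl
  rw [happ]
  constructor
  · exact hT'low x
  · have h1 := T'.le_opNorm x
    have h2 : 9 * D * (σ / 3) = 3 * (D * σ) := by ring
    rw [h2]
    calc ‖T' x‖ ≤ ‖T'‖ * ‖x‖ := h1
      _ ≤ 3 * (D * σ) * ‖x‖ := mul_le_mul_of_nonneg_right hT'norm (norm_nonneg x)
end

section
/- Fix n ∈ ℕ, 1 ≤ q ≤ 2 and 0 < ε ≤ 1/2. Define f : ℝ^n → ℓ_q^n(L_q(ℝ)) by f(a) = ε^{1−1/q}·(γ(a_1),…,γ(a_n)), where γ is the crinkled arc in L_q(ℝ). Then for all a, b ∈ ℝ^n one has ‖f(a) − f(b)‖_{ℓ_q^n(L_q(ℝ))} = ε^{1−1/q}·‖a − b‖_{ℓ₁^n}^{1/q}. Consequently, if a, b ∈ ℝ^n satisfy ‖a − b‖_{ℓ₁^n} ≥ ε, then ‖f(a) − f(b)‖_{ℓ_q^n(L_q(ℝ))} ≤ ‖a − b‖_{ℓ₁^n}; in particular f is 1-Lipschitz on every ε-separated subset of ℝ^n with respect to the ℓ₁^n metric. -/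
open MeasureTheory
open scoped ENNReal NNReal

lemma mem_uIcc_strict {s x : ℝ} (hx0 : x ≠ 0) (hxs : x ≠ s) :
    x ∈ Set.uIcc (0 : ℝ) s ↔ (0 < x ∧ x < s ∨ s < x ∧ x < 0) := by
  simp only [Set.mem_uIcc]
  constructor
  · rintro (⟨h1, h2⟩ | ⟨h1, h2⟩)
    · exact Or.inl ⟨h1.lt_of_ne' hx0, h2.lt_of_ne hxs⟩
    · exact Or.inr ⟨h1.lt_of_ne' hxs, h2.lt_of_ne hx0⟩
  · rintro (⟨h1, h2⟩ | ⟨h1, h2⟩)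
    exacts [Or.inl ⟨h1.le, h2.le⟩, Or.inr ⟨h1.le, h2.le⟩]

lemma key_ae (q : ℝ) (hq0 : 0 < q) (u v : ℝ) (huv : u ≤ v) :
    ∀ᵐ x : ℝ ∂(volume : Measure ℝ),
      ((‖(Set.uIcc (0:ℝ) v).indicator (fun _ => (1:ℝ)) x
          - (Set.uIcc (0:ℝ) u).indicator (fun _ => (1:ℝ)) x‖₊ : ℝ≥0∞)) ^ q
        = (Set.Ioc u v).indicator (fun _ => (1:ℝ≥0∞)) x := by
  have hc : ∀ c : ℝ, ∀ᵐ x : ℝ ∂(volume : Measure ℝ), x ≠ c := by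
    intro c
    rw [ae_iff]
    simp [measure_singleton]
  filter_upwards [hc 0, hc u, hc v] with x hx0 hxu hxv
  by_cases hA : (0 < x ∧ x < v ∨ v < x ∧ x < 0) <;>
    by_cases hB : (0 < x ∧ x < u ∨ u < x ∧ x < 0)
  · have hx : x ∉ Set.Ioc u v := by
      intro hm
      rw [Set.mem_Ioc] at hm
      rcases hA with ⟨h1, h2⟩ | ⟨h1, h2⟩ <;> rcases hB with ⟨h3, h4⟩ | ⟨h3, h4⟩ <;> linarith
    rw [Set.indicator_of_mem ((mem_uIcc_strict hx0 hxv).2 hA),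
      Set.indicator_of_mem ((mem_uIcc_strict hx0 hxu).2 hB),
      Set.indicator_of_notMem hx]
    simp [ENNReal.zero_rpow_of_pos hq0]
  · have hx : x ∈ Set.Ioc u v := by
      rw [Set.mem_Ioc]
      push_neg at hB
      rcases hA with ⟨h1, h2⟩ | ⟨h1, h2⟩
      · exact ⟨(hB.1 h1).lt_of_ne' hxu, h2.le⟩
      · exact absurd (hB.2 (lt_of_le_of_lt huv h1)) (not_le.2 h2)
    rw [Set.indicator_of_mem ((mem_uIcc_strict hx0 hxv).2 hA),
      Set.indicator_of_notMem (fun h => hB ((mem_uIcc_strict hx0 hxu).1 h)),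
      Set.indicator_of_mem hx]
    simp
  · have hx : x ∈ Set.Ioc u v := by
      rw [Set.mem_Ioc]
      push_neg at hA
      rcases hB with ⟨h1, h2⟩ | ⟨h1, h2⟩
      · exact absurd (hA.1 h1) (by intro h; linarith)
      · exact ⟨h1, le_of_not_gt fun hc' => absurd (hA.2 hc') (not_le.2 h2)⟩
    rw [Set.indicator_of_notMem (fun h => hA ((mem_uIcc_strict hx0 hxv).1 h)),
      Set.indicator_of_mem ((mem_uIcc_strict hx0 hxu).2 hB),
      Set.indicator_of_mem hx]
    simp
  · have hx : x ∉ Set.Ioc u v := by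
      intro hm
      rw [Set.mem_Ioc] at hm
      rcases lt_or_gt_of_ne hx0 with h | h
      · exact hB (Or.inr ⟨hm.1, h⟩)
      · exact hA (Or.inl ⟨h, hm.2.lt_of_ne hxv⟩)
    rw [Set.indicator_of_notMem (fun h => hA ((mem_uIcc_strict hx0 hxv).1 h)),
      Set.indicator_of_notMem (fun h => hB ((mem_uIcc_strict hx0 hxu).1 h)),
      Set.indicator_of_notMem hx]
    simp [ENNReal.zero_rpow_of_pos hq0]

lemma gamma_norm_le (q : ℝ) (hq1 : 1 ≤ q) [Fact ((1 : ENNReal) ≤ ENNReal.ofReal q)]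
    (γ : ℝ → Lp ℝ (ENNReal.ofReal q) (volume : Measure ℝ))
    (hγ : ∀ s : ℝ,
      (γ s : ℝ → ℝ) =ᵐ[volume] (Set.uIcc (0 : ℝ) s).indicator fun _ => (1 : ℝ))
    (u v : ℝ) (huv : u ≤ v) : ‖γ v - γ u‖ = (v - u) ^ (1 / q) := by
  have hq0 : (0 : ℝ) < q := lt_of_lt_of_le one_pos hq1
  have hp0 : ENNReal.ofReal q ≠ 0 := by
    simp only [ne_eq, ENNReal.ofReal_eq_zero, not_le]; exact hq0
  have hptop : ENNReal.ofReal q ≠ ⊤ := ENNReal.ofReal_ne_top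
  have hpt : (ENNReal.ofReal q).toReal = q := ENNReal.toReal_ofReal hq0.le
  have hcoe : ⇑(γ v - γ u) =ᵐ[volume] fun x =>
      (Set.uIcc (0:ℝ) v).indicator (fun _ => (1:ℝ)) x
        - (Set.uIcc (0:ℝ) u).indicator (fun _ => (1:ℝ)) x := by
    filter_upwards [Lp.coeFn_sub (γ v) (γ u), hγ v, hγ u] with x h1 h2 h3
    rw [h1, Pi.sub_apply, h2, h3]
  rw [Lp.norm_def, eLpNorm_congr_ae hcoe, eLpNorm_eq_lintegral_rpow_enorm_toReal hp0 hptop, hpt,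
    lintegral_congr_ae (f := fun x => ‖(Set.uIcc (0:ℝ) v).indicator (fun _ => (1:ℝ)) x
      - (Set.uIcc (0:ℝ) u).indicator (fun _ => (1:ℝ)) x‖ₑ ^ q) (key_ae q hq0 u v huv),
    lintegral_indicator measurableSet_Ioc, setLIntegral_one, Real.volume_Ioc,
    ← ENNReal.toReal_rpow, ENNReal.toReal_ofReal (sub_nonneg.2 huv)]

lemma gamma_norm (q : ℝ) (hq1 : 1 ≤ q) [Fact ((1 : ENNReal) ≤ ENNReal.ofReal q)]
    (γ : ℝ → Lp ℝ (ENNReal.ofReal q) (volume : Measure ℝ))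
    (hγ : ∀ s : ℝ,
      (γ s : ℝ → ℝ) =ᵐ[volume] (Set.uIcc (0 : ℝ) s).indicator fun _ => (1 : ℝ))
    (u v : ℝ) : ‖γ v - γ u‖ = |v - u| ^ (1 / q) := by
  rcases le_total u v with h | h
  · rw [gamma_norm_le q hq1 γ hγ u v h, abs_of_nonneg (sub_nonneg.2 h)]
  · rw [norm_sub_rev, gamma_norm_le q hq1 γ hγ v u h, abs_sub_comm,
      abs_of_nonneg (sub_nonneg.2 h)]


/-- **The mapping (2.8)/(2.9).** Fix `1 ≤ q ≤ 2` and `0 < ε ≤ 1/2`. Let `γ` be the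
crinkled arc in `L_q(ℝ)`, i.e. `γ(s)` is (the class of) the indicator of
`[min(s,0), max(s,0)]`, and let `f : ℝⁿ → ℓ_qⁿ(L_q(ℝ))` be
`f(a) = ε^{1 - 1/q}(γ(a_1), …, γ(a_n))`. Then
`‖f(a) - f(b)‖ = ε^{1 - 1/q} ‖a - b‖₁^{1/q}`, and consequently
`‖f(a) - f(b)‖ ≤ ‖a - b‖₁` whenever `‖a - b‖₁ ≥ ε`; in particular `f` is `1`-Lipschitz
on every `ε`-separated subset of `ℝⁿ` for the `ℓ₁ⁿ` metric. -/
theorem crinkled_arc_map_one_lipschitz_on_separated (n : ℕ) (q ε : ℝ)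
    (hq1 : 1 ≤ q) (hq2 : q ≤ 2) (hε0 : 0 < ε) (hε : ε ≤ 1 / 2)
    [Fact ((1 : ENNReal) ≤ ENNReal.ofReal q)]
    (γ : ℝ → Lp ℝ (ENNReal.ofReal q) (volume : Measure ℝ))
    (hγ : ∀ s : ℝ,
      (γ s : ℝ → ℝ) =ᵐ[volume] (Set.uIcc (0 : ℝ) s).indicator fun _ => (1 : ℝ))
    (f : (Fin n → ℝ) →
      PiLp (ENNReal.ofReal q) fun _ : Fin n => Lp ℝ (ENNReal.ofReal q) (volume : Measure ℝ))
    (hf : ∀ (a : Fin n → ℝ) (j : Fin n), f a j = ε ^ (1 - 1 / q) • γ (a j)) :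
    (∀ a b : Fin n → ℝ,
      ‖f a - f b‖ = ε ^ (1 - 1 / q) * (∑ i, |a i - b i|) ^ (1 / q)) ∧
    (∀ a b : Fin n → ℝ, ε ≤ ∑ i, |a i - b i| → ‖f a - f b‖ ≤ ∑ i, |a i - b i|) := by
  have hq0 : (0 : ℝ) < q := lt_of_lt_of_le one_pos hq1
  have hpt : (ENNReal.ofReal q).toReal = q := ENNReal.toReal_ofReal hq0.le
  set c : ℝ := ε ^ (1 - 1 / q) with hc
  have hc0 : 0 ≤ c := Real.rpow_nonneg hε0.le _
  have main : ∀ a b : Fin n → ℝ,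
      ‖f a - f b‖ = c * (∑ i, |a i - b i|) ^ (1 / q) := by
    intro a b
    have hS0 : (0 : ℝ) ≤ ∑ i, |a i - b i| :=
      Finset.sum_nonneg fun i _ => abs_nonneg _
    have hterm : ∀ j : Fin n, ‖(f a - f b) j‖ ^ q = c ^ q * |a j - b j| := by
      intro j
      rw [PiLp.sub_apply, hf, hf, ← smul_sub, norm_smul, Real.norm_of_nonneg hc0,
        gamma_norm q hq1 γ hγ (b j) (a j),
        Real.mul_rpow hc0 (Real.rpow_nonneg (abs_nonneg _) _),
        ← Real.rpow_mul (abs_nonneg _), one_div_mul_cancel hq0.ne', Real.rpow_one]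
    rw [PiLp.norm_eq_sum (by rw [hpt]; exact hq0), hpt]
    simp only [hterm]
    rw [← Finset.mul_sum, Real.mul_rpow (Real.rpow_nonneg hc0 q) hS0,
      ← Real.rpow_mul hc0, mul_one_div_cancel hq0.ne', Real.rpow_one]
  refine ⟨main, fun a b h => ?_⟩
  rw [main a b]
  set S : ℝ := ∑ i, |a i - b i| with hSdef
  have hS0 : (0 : ℝ) < S := lt_of_lt_of_le hε0 h
  have h1q : 1 / q ≤ 1 := by rw [div_le_one hq0]; exact hq1
  calc c * S ^ (1 / q) ≤ S ^ (1 - 1 / q) * S ^ (1 / q) := by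
        apply mul_le_mul_of_nonneg_right _ (Real.rpow_nonneg hS0.le _)
        exact Real.rpow_le_rpow hε0.le h (by linarith)
    _ = S ^ ((1 - 1 / q) + 1 / q) := (Real.rpow_add hS0 _ _).symm
    _ = S := by norm_num
end
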